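/- arXiv:1711.06060 — 5 statements merged into one kernel-verified Lean document; each statement's English description precedes it below -/
import Mathlib

section
/- Let n ≥ 1 and m ≥ 1 be integers and let A = (a_{ij}) be a 2 × m matrix whose entries a_{ij} are homogeneous polynomials of degree 1 in k[x₀, …, x_n]. Assume that for every nonzero vector v ∈ k^{n+1} the scalar matrix A(v) = (a_{ij}(v)) ∈ M_{2×m}(k) has rank 2 (i.e., A defines an epimorphism of vector bundles m·O_{ℙⁿ} → 2·O_{ℙⁿ}(1)). Then for every pair (g₁, g₂) of homogeneous polynomials of degree 2 in k[x₀, …, x_n] there exist homogeneous polynomials f₁, …, f_m of degree 1 such that Σ_{j=1}^m a_{1j} f_j = g₁ and Σ_{j=1}^m a_{2j} f_j = g₂ (i.e., the induced map H⁰(m·O(1)) → H⁰(2·O(2)) is surjective). -/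
/-!
Write `a i j = ∑ p, A i j p • X p`, `f j = ∑ p, B j p • X p` and `g i = Xᵀ H i X`. Then
`∑ j, a i j * f j = Xᵀ (A i)ᵀ B X`, so it suffices to solve `(A i)ᵀ B + Bᵀ A i = H i + (H i)ᵀ`
for `B`. By trace duality this linear system is solvable as soon as the only symmetric `S₀, S₁`
with `A₀ S₀ + A₁ S₁ = 0` are zero. For such `S₀, S₁` and `(s, t) ≠ 0`, the rank condition forces
the kernel of `s S₀ + t S₁` into the common kernel `K` of `S₀` and `S₁`: on a complement of `K`
every member of the pencil would be nondegenerate. Over an algebraically closed field some member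
degenerates (an eigenvalue of `S₀⁻¹ S₁`), so the complement is zero and `S₀ = S₁ = 0`.
-/

open MvPolynomial Module Matrix

section Pencil

variable {k V : Type*} [Field k] [IsAlgClosed k] [AddCommGroup V] [Module k V]
  [FiniteDimensional k V]

theorem LinearMap.exists_ker_smul_add_smul_ne_bot {W : Type*} [AddCommGroup W] [Module k W]
    [FiniteDimensional k W] [Nontrivial V] (h : finrank k V = finrank k W) (f g : V →ₗ[k] W) :
    ∃ s t : k, (s, t) ≠ 0 ∧ ker (s • f + t • g) ≠ ⊥ := by
  by_cases hf : ker f = ⊥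
  · let e := f.linearEquivOfInjective (ker_eq_bot.mp hf) h
    obtain ⟨μ, hμ⟩ := Module.End.exists_eigenvalue (e.symm.toLinearMap ∘ₗ g)
    obtain ⟨x, hx⟩ := hμ.exists_hasEigenvector
    have hgx : g x = μ • f x := by simpa [e] using congrArg e hx.apply_eq_smul
    refine ⟨-μ, 1, by simp, (Submodule.ne_bot_iff _).mpr ⟨x, ?_, hx.2⟩⟩
    simp [hgx]
  · exact ⟨1, 0, by simp, by simpa using hf⟩

theorem LinearMap.BilinForm.exists_ker_smul_add_smul_not_le {B₀ B₁ : LinearMap.BilinForm k V}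
    (h₀ : B₀.IsSymm) (h₁ : B₁.IsSymm) (hK : ker B₀ ⊓ ker B₁ ≠ ⊤) :
    ∃ s t : k, (s, t) ≠ 0 ∧ ¬ ker (s • B₀ + t • B₁) ≤ ker B₀ ⊓ ker B₁ := by
  obtain ⟨L, hL⟩ := (ker B₀ ⊓ ker B₁).exists_isCompl
  have : Nontrivial L := by
    rw [Submodule.nontrivial_iff_ne_bot]
    rintro rfl
    exact hK (by simpa using hL.sup_eq_top)
  obtain ⟨s, t, hst, hker⟩ := exists_ker_smul_add_smul_ne_bot Subspace.dual_finrank_eq.symm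
    (B₀.domRestrict₁₂ L L) (B₁.domRestrict₁₂ L L)
  obtain ⟨x, hx, hx0⟩ := Submodule.exists_mem_ne_zero_of_ne_bot hker
  refine ⟨s, t, hst, fun hle => hx0 ?_⟩
  -- `(s • B₀ + t • B₁) x` vanishes on the common kernel by symmetry, and on `L` by choice of `x`
  have hxker : (x : V) ∈ ker (s • B₀ + t • B₁) := by
    rw [mem_ker, ← ker_eq_top, eq_top_iff, ← hL.sup_eq_top]
    refine sup_le (fun y hy => ?_) (fun y hy => ?_)
    · simp only [Submodule.mem_inf, mem_ker] at hy
      simp [← h₀.eq, ← h₁.eq, hy.1, hy.2]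
    · simpa [domRestrict₁₂_apply] using LinearMap.congr_fun (mem_ker.mp hx) ⟨y, hy⟩
  simpa using (Submodule.disjoint_def.mp hL.disjoint) x (hle hxker) x.2

end Pencil

namespace Matrix

variable {k ι m n : Type*} [Field k] [Fintype n]

theorem linearIndependent_row_of_rank_eq_card [Fintype m] {M : Matrix m n k}
    (h : M.rank = Fintype.card m) : LinearIndependent k M.row := by
  rw [linearIndependent_iff_card_eq_finrank_span, ← h, rank_eq_finrank_span_row, Set.finrank]

theorem mem_ker_toBilin'_iff [DecidableEq n] {S : Matrix n n k} (hS : S.IsSymm) {w : n → k} :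
    w ∈ LinearMap.ker S.toBilin' ↔ S *ᵥ w = 0 := by
  simp [LinearMap.ext_iff, toBilin'_apply', dotProduct_mulVec, dotProduct_eq_zero_iff,
    ← mulVec_transpose, hS.eq]

theorem mulVec_eq_zero_of_smul_add_smul_mulVec_eq_zero {A : Fin 2 → Matrix m n k}
    (hA : ∀ v : n → k, v ≠ 0 → LinearIndependent k fun i => A i *ᵥ v) {S : Fin 2 → Matrix n n k}
    (hAS : ∑ i, A i * S i = 0) {s t : k} (hst : (s, t) ≠ 0) {w : n → k}
    (hw : (s • S 0 + t • S 1) *ᵥ w = 0) (i : Fin 2) : S i *ᵥ w = 0 := by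
  have hpair : ∀ y : n → k, (t • A 0 - s • A 1) *ᵥ y = 0 → y = 0 := by
    intro y hy
    by_contra hy0
    rw [sub_mulVec, smul_mulVec, smul_mulVec] at hy
    have := Fintype.linearIndependent_iff.mp (hA y hy0) ![t, -s]
      (by simpa [Fin.sum_univ_two, sub_eq_add_neg] using hy)
    exact hst (by simpa using And.intro (this 1) (this 0))
  rw [Fin.sum_univ_two] at hAS
  refine hpair _ ?_
  rw [mulVec_mulVec]
  fin_cases i
  · have : (t • A 0 - s • A 1) * S 0 = -(A 1 * (s • S 0 + t • S 1)) := by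
      simp only [Matrix.sub_mul, Matrix.smul_mul, Matrix.mul_add, Matrix.mul_smul]
      linear_combination (norm := module) t • hAS
    simp [this, neg_mulVec, ← mulVec_mulVec, hw]
  · have : (t • A 0 - s • A 1) * S 1 = A 0 * (s • S 0 + t • S 1) := by
      simp only [Matrix.sub_mul, Matrix.smul_mul, Matrix.mul_add, Matrix.mul_smul]
      linear_combination (norm := module) -s • hAS
    simp [this, ← mulVec_mulVec, hw]

theorem eq_zero_of_isSymm_of_sum_mul_eq_zero [IsAlgClosed k] [DecidableEq n]
    {A : Fin 2 → Matrix m n k} (hA : ∀ v : n → k, v ≠ 0 → LinearIndependent k fun i => A i *ᵥ v)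
    {S : Fin 2 → Matrix n n k} (hS : ∀ i, (S i).IsSymm) (hAS : ∑ i, A i * S i = 0) : S = 0 := by
  by_contra hS0
  have hK : LinearMap.ker (S 0).toBilin' ⊓ LinearMap.ker (S 1).toBilin' ≠ ⊤ := by
    rw [Ne, inf_eq_top_iff, LinearMap.ker_eq_top, LinearMap.ker_eq_top,
      LinearEquiv.map_eq_zero_iff, LinearEquiv.map_eq_zero_iff]
    exact fun h => hS0 (funext fun i => by fin_cases i; exacts [h.1, h.2])
  obtain ⟨s, t, hst, hle⟩ := LinearMap.BilinForm.exists_ker_smul_add_smul_not_le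
    (isSymm_toBilin'_iff_isSymm.mpr (hS 0)) (isSymm_toBilin'_iff_isSymm.mpr (hS 1)) hK
  refine hle fun w hw => ?_
  rw [← map_smul, ← map_smul, ← map_add,
    mem_ker_toBilin'_iff (((hS 0).smul s).add ((hS 1).smul t))] at hw
  simp only [Submodule.mem_inf, mem_ker_toBilin'_iff (hS _)]
  exact ⟨mulVec_eq_zero_of_smul_add_smul_mulVec_eq_zero hA hAS hst hw 0,
    mulVec_eq_zero_of_smul_add_smul_mulVec_eq_zero hA hAS hst hw 1⟩

theorem exists_eq_sum_trace_mul [Fintype m] [Fintype ι] [DecidableEq ι] [DecidableEq m]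
    [DecidableEq n] (φ : Module.Dual k (ι → Matrix m n k)) :
    ∃ P : ι → Matrix n m k, ∀ M, φ M = ∑ i, (P i * M i).trace := by
  refine ⟨fun i => of fun q p => φ (Pi.single i (single p q 1)), fun M => ?_⟩
  have hM : M = ∑ i, ∑ p, ∑ q, M i p q • Pi.single i (single p q (1 : k)) := by
    ext i p q
    simp [Finset.sum_apply, Pi.single_apply, ← matrix_eq_sum_single]
  conv_lhs => rw [hM]
  simp only [map_sum, map_smul, smul_eq_mul, trace, diag, mul_apply, of_apply]
  exact Finset.sum_congr rfl fun _ _ => Finset.sum_comm.trans (by simp only [mul_comm])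

theorem trace_mul_eq_zero_of_add_transpose_eq_zero [NeZero (2 : k)] {P G : Matrix n n k}
    (hP : P + Pᵀ = 0) (hG : G.IsSymm) : (P * G).trace = 0 := by
  have hT : (P * G).trace = (Pᵀ * G).trace := by
    rw [← trace_transpose, transpose_mul, hG.eq, trace_mul_comm]
  have h2 : 2 * (P * G).trace = 0 := by
    rw [two_mul]
    nth_rw 2 [hT]
    rw [← trace_add, ← Matrix.add_mul, hP, Matrix.zero_mul, trace_zero]
  exact (mul_eq_zero.mp h2).resolve_left two_ne_zero

theorem exists_transpose_mul_add_eq [Fintype m] [Fintype ι] [NeZero (2 : k)]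
    (A : ι → Matrix m n k)
    (hA : ∀ S : ι → Matrix n n k, (∀ i, (S i).IsSymm) → ∑ i, A i * S i = 0 → S = 0)
    (G : ι → Matrix n n k) (hG : ∀ i, (G i).IsSymm) :
    ∃ B : Matrix m n k, ∀ i, (A i)ᵀ * B + Bᵀ * A i = G i := by
  classical
  let Φ : Matrix m n k →ₗ[k] ι → Matrix n n k :=
    { toFun B i := (A i)ᵀ * B + Bᵀ * A i
      map_add' B B' := by
        ext1 i
        simp only [transpose_add, Matrix.mul_add, Matrix.add_mul, Pi.add_apply]
        abel
      map_smul' c B := by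
        ext1 i
        simp [transpose_smul, Matrix.mul_smul, Matrix.smul_mul, smul_add] }
  suffices hGΦ : G ∈ LinearMap.range Φ by
    obtain ⟨B, hB⟩ := hGΦ
    exact ⟨B, congrFun hB⟩
  by_contra hGΦ
  obtain ⟨φ, hφG, hφΦ⟩ := Submodule.exists_dual_map_eq_bot_of_notMem hGΦ inferInstance
  obtain ⟨P, hP⟩ := exists_eq_sum_trace_mul φ
  have hPΦ : ∀ B : Matrix m n k, ((∑ i, (P i + (P i)ᵀ) * (A i)ᵀ) * B).trace = 0 := by
    intro B
    have hφB : φ (Φ B) = 0 := by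
      have := Submodule.mem_map_of_mem (f := φ) (LinearMap.mem_range_self Φ B)
      rwa [hφΦ, Submodule.mem_bot] at this
    rw [← hφB, hP, Matrix.sum_mul, trace_sum]
    refine Finset.sum_congr rfl fun i _ => ?_
    simp only [Φ, LinearMap.coe_mk, AddHom.coe_mk, Matrix.mul_add, Matrix.add_mul, trace_add]
    rw [← trace_transpose (P i * (Bᵀ * A i))]
    simp only [transpose_mul, transpose_transpose, ← Matrix.mul_assoc]
    rw [trace_mul_comm ((A i)ᵀ * B), Matrix.mul_assoc (P i)ᵀ]
  have hAP : ∑ i, A i * (P i + (P i)ᵀ) = 0 := by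
    have : ∑ i, (P i + (P i)ᵀ) * (A i)ᵀ = 0 :=
      ext_iff_trace_mul_right.mpr fun B => by simpa using hPΦ B
    simpa [transpose_sum, transpose_mul, (isSymm_add_transpose_self _).eq] using
      congrArg transpose this
  have hP0 := hA _ (fun i => isSymm_add_transpose_self (P i)) hAP
  refine hφG ?_
  rw [hP]
  exact Finset.sum_eq_zero fun i _ =>
    trace_mul_eq_zero_of_add_transpose_eq_zero (congrFun hP0 i) (hG i)

theorem toMvPolynomial_eq_mulVec (M : Matrix m n k) : M.toMvPolynomial = M.map C *ᵥ X := by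
  ext1 i
  simp [toMvPolynomial, mulVec, dotProduct, C_mul_X_eq_monomial]

theorem dotProduct_toMvPolynomial_transpose (M : Matrix n n k) :
    X ⬝ᵥ Mᵀ.toMvPolynomial = X ⬝ᵥ M.toMvPolynomial := by
  rw [toMvPolynomial_eq_mulVec, toMvPolynomial_eq_mulVec, transpose_map, mulVec_transpose,
    dotProduct_comm, dotProduct_mulVec]

theorem toMvPolynomial_dotProduct_toMvPolynomial [Fintype m] (A B : Matrix m n k) :
    A.toMvPolynomial ⬝ᵥ B.toMvPolynomial = X ⬝ᵥ (Aᵀ * B).toMvPolynomial := by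
  rw [toMvPolynomial_eq_mulVec, toMvPolynomial_eq_mulVec, toMvPolynomial_eq_mulVec,
    ← vecMul_transpose, ← dotProduct_mulVec, mulVec_mulVec, Matrix.map_mul, transpose_map]

theorem dotProduct_toMvPolynomial_eq_of_add_transpose_eq [NeZero (2 : k)] {M N : Matrix n n k}
    (h : M + Mᵀ = N + Nᵀ) : X ⬝ᵥ M.toMvPolynomial = X ⬝ᵥ N.toMvPolynomial := by
  refine smul_right_injective (MvPolynomial n k) (two_ne_zero' k) ?_
  simp only [two_smul]
  nth_rw 2 [← dotProduct_toMvPolynomial_transpose M]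
  nth_rw 2 [← dotProduct_toMvPolynomial_transpose N]
  rw [← dotProduct_add, ← dotProduct_add, ← toMvPolynomial_add, ← toMvPolynomial_add, h]

end Matrix

namespace MvPolynomial

variable {k σ : Type*} [Field k] [CharZero k] [Fintype σ]

theorem IsHomogeneous.exists_eq_sum_X_mul {φ : MvPolynomial σ k} {d : ℕ}
    (h : φ.IsHomogeneous (d + 1)) :
    ∃ ψ : σ → MvPolynomial σ k, (∀ i, (ψ i).IsHomogeneous d) ∧ φ = ∑ i, X i * ψ i := by
  refine ⟨fun i => C ((d + 1 : k)⁻¹) * pderiv i φ,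
    fun i => by simpa using (isHomogeneous_C σ _).mul h.pderiv, ?_⟩
  simp_rw [mul_left_comm _ (C _), ← Finset.mul_sum, h.sum_X_mul_pderiv, nsmul_eq_mul, ← mul_assoc]
  rw [← map_natCast C, ← map_mul, Nat.cast_add, Nat.cast_one,
    inv_mul_cancel₀ (Nat.cast_add_one_ne_zero d), map_one, one_mul]

theorem exists_eq_toMvPolynomial {m : Type*} {a : m → MvPolynomial σ k}
    (ha : ∀ j, (a j).IsHomogeneous 1) : ∃ A : Matrix m σ k, a = A.toMvPolynomial := by
  have : ∀ j, ∃ c : σ → k, a j = ∑ i, C (c i) * X i := by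
    intro j
    obtain ⟨ψ, hψ, hψa⟩ := (ha j).exists_eq_sum_X_mul (d := 0)
    refine ⟨fun i => coeff 0 (ψ i), hψa.trans (Finset.sum_congr rfl fun i _ => ?_)⟩
    have hψi := hψ i
    rw [← totalDegree_zero_iff_isHomogeneous, totalDegree_eq_zero_iff_eq_C] at hψi
    rw [hψi, mul_comm]
  choose A hA using this
  refine ⟨A, ?_⟩
  ext1 j
  simp [hA j, toMvPolynomial, C_mul_X_eq_monomial]

theorem IsHomogeneous.exists_eq_dotProduct_toMvPolynomial {φ : MvPolynomial σ k}
    (h : φ.IsHomogeneous 2) : ∃ H : Matrix σ σ k, φ = X ⬝ᵥ H.toMvPolynomial := by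
  obtain ⟨ψ, hψ, rfl⟩ := h.exists_eq_sum_X_mul (d := 1)
  obtain ⟨H, rfl⟩ := exists_eq_toMvPolynomial hψ
  exact ⟨H, rfl⟩

end MvPolynomial

theorem stmt_2_general {k : Type*} [Field k] [IsAlgClosed k] [CharZero k]
    (n m : ℕ)
    (a : Fin 2 → Fin m → MvPolynomial (Fin (n + 1)) k)
    (ha : ∀ i j, (a i j).IsHomogeneous 1)
    (hrank : ∀ v : Fin (n + 1) → k, v ≠ 0 →
      Matrix.rank (Matrix.of fun i j => eval v (a i j)) = 2) :
    ∀ g : Fin 2 → MvPolynomial (Fin (n + 1)) k, (∀ i, (g i).IsHomogeneous 2) →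
      ∃ f : Fin m → MvPolynomial (Fin (n + 1)) k,
        (∀ j, (f j).IsHomogeneous 1) ∧ ∀ i, ∑ j, a i j * f j = g i := by
  intro g hg
  obtain ⟨A, rfl⟩ : ∃ A : Fin 2 → Matrix (Fin m) (Fin (n + 1)) k,
      a = fun i => (A i).toMvPolynomial := by
    choose A hA using fun i => exists_eq_toMvPolynomial (ha i)
    exact ⟨A, funext hA⟩
  choose H hH using fun i => (hg i).exists_eq_dotProduct_toMvPolynomial
  have hA : ∀ v : Fin (n + 1) → k, v ≠ 0 → LinearIndependent k fun i => A i *ᵥ v := by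
    intro v hv
    have hrow := linearIndependent_row_of_rank_eq_card (hrank v hv)
    simp only [row, toMvPolynomial_eval_eq_apply] at hrow
    exact hrow
  obtain ⟨B, hB⟩ := exists_transpose_mul_add_eq A
    (fun S hS hAS => eq_zero_of_isSymm_of_sum_mul_eq_zero hA hS hAS)
    (fun i => H i + (H i)ᵀ) (fun i => isSymm_add_transpose_self _)
  refine ⟨B.toMvPolynomial, toMvPolynomial_isHomogeneous B, fun i => ?_⟩
  rw [hH i, ← dotProduct_toMvPolynomial_eq_of_add_transpose_eq (M := (A i)ᵀ * B)
    (by simpa [transpose_mul] using hB i)]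
  exact toMvPolynomial_dotProduct_toMvPolynomial (A i) B

/-- If a `2 × m` matrix of linear forms on `ℙⁿ` has rank `2` at every point (i.e. it
defines an epimorphism `m·O → 2·O(1)`), then the induced map on global sections
`H⁰(m·O(1)) → H⁰(2·O(2))` is surjective. -/
theorem stmt_2 {k : Type*} [Field k] [IsAlgClosed k] [CharZero k]
    (n m : ℕ) (hn : 1 ≤ n) (hm : 1 ≤ m)
    (a : Fin 2 → Fin m → MvPolynomial (Fin (n + 1)) k)
    (ha : ∀ i j, (a i j).IsHomogeneous 1)
    (hrank : ∀ v : Fin (n + 1) → k, v ≠ 0 →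
      Matrix.rank (Matrix.of fun i j => eval v (a i j)) = 2) :
    ∀ g : Fin 2 → MvPolynomial (Fin (n + 1)) k, (∀ i, (g i).IsHomogeneous 2) →
      ∃ f : Fin m → MvPolynomial (Fin (n + 1)) k,
        (∀ j, (f j).IsHomogeneous 1) ∧ ∀ i, ∑ j, a i j * f j = g i :=
  stmt_2_general n m a ha hrank
end

section
/- Let n ≥ 1 and m ≥ 1 be integers and let A = (a_{ij}) be a 2 × m matrix whose entries a_{ij} are homogeneous polynomials of degree 1 in k[x₀, …, x_n]. Assume that for every nonzero vector v ∈ k^{n+1} the scalar matrix A(v) = (a_{ij}(v)) ∈ M_{2×m}(k) has rank 2. Then the k-linear span of the m column vectors (a_{1j}, a_{2j}) ∈ S₁ × S₁ (where S₁ is the space of linear forms) has dimension at least n + 2. -/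
/-!
Let `W ⊆ S₁ × S₁` be the span of the columns. Evaluating the two coordinates of `w ∈ W` at a
point `v` gives two linear maps `f, g : kⁿ⁺¹ → W^*`, and the rank condition says exactly that
`f v` and `g v` are linearly independent for every `v ≠ 0`. If `dim W ≤ n + 1`, then `f` is
injective (take `v ∈ ker f`), hence an isomorphism, and an eigenvector `v` of `f⁻¹ ∘ g`, which
exists since `k` is algebraically closed, satisfies `g v = μ • f v`: a contradiction.
-/

open MvPolynomial Module

theorem LinearMap.exists_ne_zero_not_linearIndependent_pair {K V U : Type*} [Field K]
    [IsAlgClosed K] [AddCommGroup V] [Module K V] [FiniteDimensional K V] [Nontrivial V]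
    [AddCommGroup U] [Module K U] [FiniteDimensional K U]
    (f g : V →ₗ[K] U) (hdim : finrank K U ≤ finrank K V) :
    ∃ v ≠ 0, ¬ LinearIndependent K ![f v, g v] := by
  by_cases hf : Function.Injective f
  · let e := f.linearEquivOfInjective hf
      (le_antisymm (LinearMap.finrank_le_finrank_of_injective hf) hdim)
    obtain ⟨μ, hμ⟩ := Module.End.exists_eigenvalue (e.symm.toLinearMap ∘ₗ g)
    obtain ⟨v, hv⟩ := hμ.exists_hasEigenvector
    have hgv : μ • f v = g v := by
      simpa [e] using (congrArg e hv.apply_eq_smul).symm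
    exact ⟨v, hv.2, fun hli => by
      simpa using (LinearIndependent.pair_iff.mp hli μ (-1) (by simp [hgv])).2⟩
  · obtain ⟨v, hfv, hv⟩ := (Submodule.ne_bot_iff _).mp (mt LinearMap.ker_eq_bot.mp hf)
    exact ⟨v, hv, fun hli => hli.ne_zero 0 (by simpa using hfv)⟩

theorem Matrix.linearIndependent_row_of_rank_eq_card_s3 {m n R : Type*} [Field R] [Fintype m]
    [Fintype n] {M : Matrix m n R} (h : M.rank = Fintype.card m) : LinearIndependent R M.row := by
  rw [linearIndependent_iff_card_eq_finrank_span, Set.finrank, ← M.rank_eq_finrank_span_row, h]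

namespace MvPolynomial

variable {σ k : Type*} [Fintype σ] [CommSemiring k]

theorem IsHomogeneous.eval_eq_sum_coeff_single_one {p : MvPolynomial σ k}
    (hp : p.IsHomogeneous 1) (v : σ → k) :
    eval v p = ∑ i, coeff (Finsupp.single i 1) p * v i := by
  classical
  have hsupp : p.support ⊆ Finset.univ.image (Finsupp.single · 1) := by
    intro d hd
    obtain ⟨i, rfl⟩ : d ∈ Set.range (Finsupp.single · 1) := by
      rw [Finsupp.range_single_one, Set.mem_ofPred_eq, Finsupp.degree_eq_weight_one]
      exact hp (mem_support_iff.mp hd)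
    exact Finset.mem_image_of_mem _ (Finset.mem_univ i)
  rw [eval_eq, Finset.sum_subset hsupp fun d _ hd => by rw [notMem_support_iff.mp hd, zero_mul],
    Finset.sum_image fun i _ j _ h => Finsupp.single_left_injective one_ne_zero h]
  simp

variable (σ k) in
/-- Agrees with evaluation on linear forms, but unlike `eval` it is linear in the point. -/
noncomputable def linearPartPairing : (σ → k) →ₗ[k] MvPolynomial σ k →ₗ[k] k :=
  ∑ i, (LinearMap.proj i).smulRight (lcoeff k (Finsupp.single i 1))

theorem linearPartPairing_apply_of_isHomogeneous {p : MvPolynomial σ k}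
    (hp : p.IsHomogeneous 1) (v : σ → k) : linearPartPairing σ k v p = eval v p := by
  simp [linearPartPairing, hp.eval_eq_sum_coeff_single_one, mul_comm]

end MvPolynomial

theorem stmt_3_general {k : Type*} [Field k] [IsAlgClosed k]
    (n m : ℕ)
    (a : Fin 2 → Fin m → MvPolynomial (Fin (n + 1)) k)
    (ha : ∀ i j, (a i j).IsHomogeneous 1)
    (hrank : ∀ v : Fin (n + 1) → k, v ≠ 0 →
      Matrix.rank (Matrix.of fun i j => eval v (a i j)) = 2) :
    n + 2 ≤ Module.finrank k
      ↥(Submodule.span k (Set.range fun j : Fin m =>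
        ((a 0 j, a 1 j) : MvPolynomial (Fin (n + 1)) k × MvPolynomial (Fin (n + 1)) k))) := by
  set col := fun j : Fin m =>
    ((a 0 j, a 1 j) : MvPolynomial (Fin (n + 1)) k × MvPolynomial (Fin (n + 1)) k)
  set W := Submodule.span k (Set.range col)
  have : FiniteDimensional k W := .span_of_finite k (Set.finite_range col)
  let evalFst := (linearPartPairing (Fin (n + 1)) k).compl₂ (LinearMap.fst k _ _ ∘ₗ W.subtype)
  let evalSnd := (linearPartPairing (Fin (n + 1)) k).compl₂ (LinearMap.snd k _ _ ∘ₗ W.subtype)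
  let evalCols : Dual k W →ₗ[k] Fin m → k :=
    LinearMap.pi fun j => LinearMap.applyₗ ⟨col j, Submodule.subset_span ⟨j, rfl⟩⟩
  by_contra! hW
  obtain ⟨v, hv, hdep⟩ := LinearMap.exists_ne_zero_not_linearIndependent_pair evalFst evalSnd
    (by rw [Subspace.dual_finrank_eq, finrank_fin_fun]; omega)
  refine hdep (.of_comp evalCols ?_)
  convert Matrix.linearIndependent_row_of_rank_eq_card_s3 (hrank v hv)
  ext i j
  fin_cases i <;>
    simp [evalCols, evalFst, evalSnd, col, linearPartPairing_apply_of_isHomogeneous (ha _ _)]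

/-- If a `2 × m` matrix of linear forms on `ℙⁿ` has rank `2` at every point (i.e. it
defines an epimorphism `m·O → 2·O(1)`), then the span of its columns in `S₁ × S₁`
has dimension at least `n + 2`. -/
theorem stmt_3 {k : Type*} [Field k] [IsAlgClosed k] [CharZero k]
    (n m : ℕ) (hn : 1 ≤ n) (hm : 1 ≤ m)
    (a : Fin 2 → Fin m → MvPolynomial (Fin (n + 1)) k)
    (ha : ∀ i j, (a i j).IsHomogeneous 1)
    (hrank : ∀ v : Fin (n + 1) → k, v ≠ 0 →
      Matrix.rank (Matrix.of fun i j => eval v (a i j)) = 2) :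
    n + 2 ≤ Module.finrank k
      ↥(Submodule.span k (Set.range fun j : Fin m =>
        ((a 0 j, a 1 j) : MvPolynomial (Fin (n + 1)) k × MvPolynomial (Fin (n + 1)) k))) :=
  stmt_3_general n m a ha hrank
end

section
/- Let V₁, V₂, V₃ ⊆ k⁴ be 2-dimensional linear subspaces with V_i ∩ V_j = {0} for i ≠ j, and let w₀, w₁, w₂, w₃ ∈ k⁴ be nonzero vectors that span k⁴. Assume that for each l ∈ {1,2,3}, the only homogeneous polynomial of degree 2 vanishing on both subspaces V_p with p ≠ l and at all four vectors w₀, …, w₃ is the zero polynomial. Then the k-vector space of homogeneous polynomials of degree 3 vanishing on V₁ ∪ V₂ ∪ V₃ and at all four vectors w₀, …, w₃ has dimension exactly 4 (i.e., h⁰(I_{Y∪W}(3)) = 4). -/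
/-!
The lower bound is a parameter count: a cubic restricted to a line is a binary cubic, so each
line imposes at most 4 conditions, and the lines and points together at most 16 conditions on the
20-dimensional space of cubics.

For the upper bound, note first that no `wᵢ` lies on a line: otherwise the quadrics through that
line, one other line and the three other points, a space of dimension at least 10 - 3 - 3 - 3,
would contain a nonzero quadric through two lines and all four points. Hence there is a plane
`H = {h = 0}` containing `V₀` and avoiding every `wᵢ`. A cubic `f` of our space restricts on `H`
to `ℓ q`, where `ℓ` cuts out `V₀` in `H` and `q` is a conic through the points `H ∩ V₁` and
`H ∩ V₂`; these conics form a space of dimension 6 - 2 = 4. The restriction is injective: if `f`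
vanishes on `H`, then `f = h g`, and since `h` vanishes neither identically on `V₁`, `V₂` nor at
any `wᵢ`, the quadric `g` passes through `V₁`, `V₂` and all `wᵢ`, so `g = 0`.
-/

open MvPolynomial

def vanishingSubmodule {k : Type*} [Field k] (T : Set (Fin 4 → k)) :
    Submodule k (MvPolynomial (Fin 4) k) where
  carrier := {f | ∀ v ∈ T, MvPolynomial.eval v f = 0}
  zero_mem' := fun v _ => by simp
  add_mem' := fun {f g} hf hg v hv => by simp [hf v hv, hg v hv]
  smul_mem' := fun c f hf v hv => by simp [MvPolynomial.smul_eval, hf v hv]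

open Module

section

variable {k : Type*} [Field k]

section LinearAlgebra

variable {E F : Type*} [AddCommGroup E] [Module k E] [AddCommGroup F] [Module k F]

theorem Submodule.finrank_map_add_finrank_inf_ker (A : Submodule k E) [FiniteDimensional k A]
    (φ : E →ₗ[k] F) : finrank k (A.map φ) + finrank k ↥(A ⊓ LinearMap.ker φ) = finrank k A := by
  have := LinearMap.finrank_range_add_finrank_ker (φ ∘ₗ A.subtype)
  rwa [LinearMap.range_comp, Submodule.range_subtype, LinearMap.ker_comp,
    ← Submodule.finrank_map_subtype_eq, Submodule.map_comap_subtype] at this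

theorem Submodule.inf_ne_bot_of_finrank_lt_add [FiniteDimensional k E] {W₁ W₂ : Submodule k E}
    (h : finrank k E < finrank k W₁ + finrank k W₂) : W₁ ⊓ W₂ ≠ ⊥ := fun hbot =>
  (Submodule.finrank_add_finrank_le_of_disjoint (disjoint_iff.2 hbot)).not_gt h

theorem LinearMap.exists_apply_mem_ne_zero_of_finrank_lt_add [FiniteDimensional k E]
    (L : F →ₗ[k] E) {W : Submodule k E}
    (h : finrank k E < finrank k W + finrank k (LinearMap.range L)) : ∃ y, L y ∈ W ∧ L y ≠ 0 := by
  obtain ⟨_, ⟨hxW, y, rfl⟩, hx0⟩ :=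
    Submodule.exists_mem_ne_zero_of_ne_bot (Submodule.inf_ne_bot_of_finrank_lt_add h)
  exact ⟨y, hxW, hx0⟩

theorem LinearIndependent.pair_of_inf_eq_bot {W₁ W₂ : Submodule k E} (h : W₁ ⊓ W₂ = ⊥) {x y : E}
    (hx : x ∈ W₁) (hy : y ∈ W₂) (hx0 : x ≠ 0) (hy0 : y ≠ 0) : LinearIndependent k ![x, y] := by
  refine LinearIndependent.pair_iff.2 fun s t hst => ?_
  have hsx : s • x ∈ W₁ ⊓ W₂ :=
    ⟨W₁.smul_mem s hx, by rw [eq_neg_of_add_eq_zero_left hst]; exact W₂.neg_mem (W₂.smul_mem t hy)⟩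
  rw [h, Submodule.mem_bot, smul_eq_zero] at hsx
  obtain rfl : s = 0 := hsx.resolve_right hx0
  simpa [hy0] using hst

theorem Submodule.exists_injective_range_eq (W : Submodule k E) [FiniteDimensional k W] {r : ℕ}
    (hW : finrank k W = r) :
    ∃ L : (Fin r → k) →ₗ[k] E, Function.Injective L ∧ LinearMap.range L = W := by
  let e := (Module.finBasisOfFinrankEq k W hW).equivFun.symm
  refine ⟨W.subtype ∘ₗ e.toLinearMap, W.injective_subtype.comp e.injective, ?_⟩
  rw [LinearMap.range_comp, LinearEquiv.range, Submodule.map_top, Submodule.range_subtype]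

theorem Submodule.exists_dual_ker_eq [FiniteDimensional k E] (W : Submodule k E)
    (hW : finrank k W + 1 = finrank k E) : ∃ ψ : Dual k E, ψ ≠ 0 ∧ LinearMap.ker ψ = W := by
  have hlt : W < ⊤ := lt_top_iff_ne_top.2 fun h => by
    rw [h, finrank_top] at hW
    omega
  obtain ⟨ψ, hψ, hWψ⟩ := W.exists_le_ker_of_lt_top hlt
  refine ⟨ψ, hψ, (Submodule.eq_of_le_of_finrank_le hWψ ?_).symm⟩
  have := Module.Dual.finrank_ker_add_one_of_ne_zero hψ
  omega

theorem Submodule.exists_dual_le_ker_forall_apply_ne_zero [Infinite k] {ι : Type*} [Finite ι]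
    (W : Submodule k E) {v : ι → E} (hv : ∀ i, v i ∉ W) :
    ∃ h : Dual k E, W ≤ LinearMap.ker h ∧ ∀ i, h (v i) ≠ 0 := by
  obtain ⟨f, hf⟩ := Module.exists_dual_forall_apply_ne_zero (K := k) (fun i => W.mkQ (v i))
    fun i => by simpa [Submodule.Quotient.mk_eq_zero] using hv i
  exact ⟨f ∘ₗ W.mkQ, fun x hx => by simp [(Submodule.Quotient.mk_eq_zero W).2 hx], hf⟩

theorem Module.Dual.exists_linearEquiv_apply_eq_apply_zero {m : ℕ} {φ : Dual k (Fin (m + 1) → k)}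
    (hφ : φ ≠ 0) : ∃ A : (Fin (m + 1) → k) ≃ₗ[k] (Fin (m + 1) → k), ∀ y, φ (A y) = y 0 := by
  obtain ⟨v, hv⟩ := LinearMap.surjective hφ 1
  have hker : finrank k (LinearMap.ker φ) = m := by
    have := Module.Dual.finrank_ker_add_one_of_ne_zero hφ
    rw [Module.finrank_fin_fun] at this
    omega
  let bK := Module.finBasisOfFinrankEq k _ hker
  have hli : LinearIndependent k (Fin.cons v fun i => (bK i : Fin (m + 1) → k)) := by
    have hK : LinearIndependent k fun i => (bK i : Fin (m + 1) → k) :=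
      bK.linearIndependent.map' (LinearMap.ker φ).subtype (LinearMap.ker φ).ker_subtype
    refine linearIndependent_finCons.2 ⟨hK, fun hspan => ?_⟩
    have : v ∈ LinearMap.ker φ := Submodule.span_le.2 (by rintro _ ⟨i, rfl⟩; exact (bK i).2) hspan
    simp [hv] at this
  have hcard : Fintype.card (Fin (m + 1)) = finrank k (Fin (m + 1) → k) := by
    rw [Fintype.card_fin, Module.finrank_fin_fun]
  refine ⟨(basisOfLinearIndependentOfCardEqFinrank hli hcard).equivFun.symm, fun y => ?_⟩
  simp [Module.Basis.equivFun_symm_apply, Fin.sum_univ_succ, hv]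

end LinearAlgebra

namespace MvPolynomial

noncomputable def linearForm {m : ℕ} (φ : (Fin m → k) →ₗ[k] k) : MvPolynomial (Fin m) k :=
  ∑ i, C (φ (Pi.single i 1)) * X i

@[simp]
theorem eval_linearForm {m : ℕ} (φ : (Fin m → k) →ₗ[k] k) (x : Fin m → k) :
    eval x (linearForm φ) = φ x := by
  rw [LinearMap.pi_apply_eq_sum_univ φ x]
  simp only [linearForm, map_sum, map_mul, eval_C, eval_X, smul_eq_mul, mul_comm]
  refine Finset.sum_congr rfl fun i _ => ?_
  congr 2
  ext j
  simp [Pi.single_apply, eq_comm]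

theorem isHomogeneous_linearForm {m : ℕ} (φ : (Fin m → k) →ₗ[k] k) :
    (linearForm φ).IsHomogeneous 1 :=
  IsHomogeneous.sum _ _ _ fun i _ => isHomogeneous_C_mul_X _ i

noncomputable def pullback {r m : ℕ} (L : (Fin r → k) →ₗ[k] (Fin m → k)) :
    MvPolynomial (Fin m) k →ₐ[k] MvPolynomial (Fin r) k :=
  aeval fun i => linearForm (LinearMap.proj i ∘ₗ L)

@[simp]
theorem eval_pullback {r m : ℕ} (L : (Fin r → k) →ₗ[k] (Fin m → k)) (f : MvPolynomial (Fin m) k)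
    (y : Fin r → k) : eval y (pullback L f) = eval (L y) f := by
  change aeval y (aeval _ f) = _
  rw [comp_aeval_apply]
  simp

theorem IsHomogeneous.pullback {r m n : ℕ} {f : MvPolynomial (Fin m) k} (hf : f.IsHomogeneous n)
    (L : (Fin r → k) →ₗ[k] (Fin m → k)) : (pullback L f).IsHomogeneous n := by
  have := hf.aeval (fun i => linearForm (LinearMap.proj i ∘ₗ L)) fun i => isHomogeneous_linearForm _
  rwa [one_mul] at this

theorem eval_eq_zero_of_pullback_eq_zero {r m : ℕ} {L : (Fin r → k) →ₗ[k] (Fin m → k)}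
    {f : MvPolynomial (Fin m) k} (h : pullback L f = 0) {x : Fin m → k}
    (hx : x ∈ LinearMap.range L) : eval x f = 0 := by
  obtain ⟨y, rfl⟩ := hx
  simpa using congrArg (eval y) h

noncomputable def evalAt {m : ℕ} {ι : Type*} (p : ι → Fin m → k) :
    MvPolynomial (Fin m) k →ₗ[k] (ι → k) :=
  LinearMap.pi fun i => (aeval (p i)).toLinearMap

@[simp]
theorem evalAt_apply {m : ℕ} {ι : Type*} (p : ι → Fin m → k) (f : MvPolynomial (Fin m) k) (i : ι) :
    evalAt p f i = eval (p i) f := rfl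

instance {σ : Type*} [Finite σ] {n : ℕ} : FiniteDimensional k (homogeneousSubmodule σ k n) :=
  Module.Finite.iff_fg.2 (homogeneousSubmodule_fg _ _ n)

theorem finrank_homogeneousSubmodule (σ : Type*) [Fintype σ] (n : ℕ) :
    finrank k (homogeneousSubmodule σ k n) = (Fintype.card σ + n - 1).choose n := by
  classical
  rw [homogeneousSubmodule_eq_finsupp_supported]
  refine (finrank_eq_nat_card_basis
    (basisRestrictSupport k {d : σ →₀ ℕ | d.degree = n})).trans ?_
  rw [Nat.card_congr ((Sym.equivNatSum σ n).trans (Equiv.subtypeEquivRight fun d => ?_)).symm,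
    Nat.card_eq_fintype_card, Sym.card_sym_eq_choose]
  rfl

theorem X_zero_dvd_of_eval_cons_zero {R : Type*} [CommRing R] [IsDomain R] [Infinite R] {m : ℕ}
    {f : MvPolynomial (Fin (m + 1)) R} (hf : ∀ y, eval (Fin.cons 0 y) f = 0) : X 0 ∣ f := by
  rw [← map_dvd_iff (finSuccEquiv R m), finSuccEquiv_X_zero, Polynomial.X_dvd_iff]
  refine MvPolynomial.funext fun y => ?_
  simpa [eval_eq_eval_mv_eval', Polynomial.eval_map, Polynomial.coeff_zero_eq_eval_zero] using hf y

theorem IsHomogeneous.of_X_mul {σ R : Type*} [CommSemiring R] {n : ℕ} {g : MvPolynomial σ R} {i : σ}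
    (h : (X i * g).IsHomogeneous (n + 1)) : g.IsHomogeneous n := by
  intro d hd
  have := h (by rwa [coeff_X_mul] : coeff (Finsupp.single i 1 + d) (X i * g) ≠ 0)
  simp only [map_add, Finsupp.weight_single, Pi.one_apply, smul_eq_mul, mul_one] at this
  omega

theorem exists_isHomogeneous_eq_linearForm_mul [Infinite k] {m n : ℕ}
    {φ : Dual k (Fin m → k)} (hφ : φ ≠ 0) {f : MvPolynomial (Fin m) k}
    (hf : f.IsHomogeneous (n + 1)) (hvan : ∀ x, φ x = 0 → eval x f = 0) :
    ∃ g : MvPolynomial (Fin m) k, g.IsHomogeneous n ∧ f = linearForm φ * g := by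
  cases m with
  | zero => exact absurd (Subsingleton.elim φ 0) hφ
  | succ m =>
    obtain ⟨A, hA⟩ := Module.Dual.exists_linearEquiv_apply_eq_apply_zero hφ
    obtain ⟨G, hG⟩ : X 0 ∣ pullback A.toLinearMap f :=
      X_zero_dvd_of_eval_cons_zero fun y => by simpa using hvan _ (by simp [hA])
    refine ⟨pullback A.symm.toLinearMap G, (IsHomogeneous.of_X_mul (hG ▸ hf.pullback _)).pullback _,
      MvPolynomial.funext fun x => ?_⟩
    have := congrArg (eval (A.symm x)) hG
    simp only [eval_pullback, LinearEquiv.coe_coe, LinearEquiv.apply_symm_apply, map_mul,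
      eval_X] at this
    simp [this, ← hA]

theorem eval_eq_zero_of_eval_mul_eq_zero [Infinite k] {m : ℕ} {W : Submodule k (Fin m → k)}
    {f g : MvPolynomial (Fin m) k} (hfg : ∀ x ∈ W, eval x f * eval x g = 0)
    (hf : ∃ x ∈ W, eval x f ≠ 0) : ∀ x ∈ W, eval x g = 0 := by
  obtain ⟨L, -, hL⟩ := W.exists_injective_range_eq rfl
  simp only [← hL, LinearMap.mem_range, forall_exists_index, forall_apply_eq_imp_iff,
    exists_exists_eq_and] at hfg hf ⊢
  have hprod : pullback L f * pullback L g = 0 :=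
    MvPolynomial.funext fun y => by simpa using hfg y
  have hf' : pullback L f ≠ 0 := by
    obtain ⟨y, hy⟩ := hf
    exact fun h => hy (by simpa using congrArg (eval y) h)
  intro y
  simpa using congrArg (eval y) ((mul_eq_zero.1 hprod).resolve_left hf')

theorem map_evalAt_homogeneousSubmodule {ι : Type*} [Fintype ι] {m n : ℕ} {p : ι → Fin m → k}
    (hp : LinearIndependent k p) (hn : n ≠ 0) :
    (homogeneousSubmodule (Fin m) k n).map (evalAt p) = ⊤ := by
  classical
  obtain ⟨g, hg⟩ := LinearMap.exists_leftInverse_of_injective (Fintype.linearCombination k p)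
    (LinearMap.ker_eq_bot.2 hp.fintypeLinearCombination_injective)
  have hgp : ∀ i, g (p i) = Pi.single i 1 := fun i => by
    simpa using LinearMap.congr_fun hg (Pi.single i 1)
  refine eq_top_iff.2 fun c _ => ⟨∑ i, c i • linearForm (LinearMap.proj i ∘ₗ g) ^ n, ?_, ?_⟩
  · refine Submodule.sum_mem _ fun i _ => Submodule.smul_mem _ _ ?_
    simpa using (isHomogeneous_linearForm (LinearMap.proj i ∘ₗ g)).pow n
  · ext j
    simp [hgp, Pi.single_apply, hn]

theorem finrank_le_finrank_inf_ker_evalAt_add {ι : Type*} [Fintype ι] {m : ℕ}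
    (A : Submodule k (MvPolynomial (Fin m) k)) [FiniteDimensional k A] (p : ι → Fin m → k) :
    finrank k A ≤ finrank k ↥(A ⊓ LinearMap.ker (evalAt p)) + Fintype.card ι := by
  have := A.finrank_map_add_finrank_inf_ker (evalAt p)
  have := (A.map (evalAt p)).finrank_le
  rw [Module.finrank_pi] at this
  omega

theorem finrank_le_finrank_inf_iInf_ker_pullback_add {ι : Type*} {r m n : ℕ}
    (L : ι → (Fin r → k) →ₗ[k] (Fin m → k)) (s : Finset ι)
    {A : Submodule k (MvPolynomial (Fin m) k)} (hA : A ≤ homogeneousSubmodule (Fin m) k n) :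
    finrank k A ≤ finrank k ↥(A ⊓ ⨅ i ∈ s, LinearMap.ker (pullback (L i)).toLinearMap)
      + s.card * (r + n - 1).choose n := by
  classical
  induction s using Finset.induction_on with
  | empty =>
    rw [show (⨅ i ∈ (∅ : Finset ι), LinearMap.ker (pullback (L i)).toLinearMap) = ⊤ by simp,
      inf_top_eq]
    simp
  | insert i s hi ih =>
    rw [Finset.iInf_insert, inf_comm (LinearMap.ker _), ← inf_assoc,
      Finset.card_insert_of_notMem hi, add_mul, one_mul]
    set B := A ⊓ ⨅ j ∈ s, LinearMap.ker (pullback (L j)).toLinearMap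
    have hB : B ≤ homogeneousSubmodule (Fin m) k n := inf_le_left.trans hA
    have := Submodule.finiteDimensional_of_le hB
    have hmap : B.map (pullback (L i)).toLinearMap ≤ homogeneousSubmodule (Fin r) k n := by
      rintro _ ⟨f, hf, rfl⟩
      exact (hB hf).pullback (L i)
    have := B.finrank_map_add_finrank_inf_ker (pullback (L i)).toLinearMap
    have := Submodule.finrank_mono hmap
    rw [finrank_homogeneousSubmodule, Fintype.card_fin] at this
    omega

theorem choose_le_finrank_inf_ker_add {ι κ : Type*} [Fintype κ] {r m : ℕ} (n : ℕ)
    (L : ι → (Fin r → k) →ₗ[k] (Fin m → k)) (s : Finset ι) (p : κ → Fin m → k) :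
    (m + n - 1).choose n ≤ finrank k ↥(homogeneousSubmodule (Fin m) k n
        ⊓ (⨅ i ∈ s, LinearMap.ker (pullback (L i)).toLinearMap) ⊓ LinearMap.ker (evalAt p))
      + s.card * (r + n - 1).choose n + Fintype.card κ := by
  have hlines := finrank_le_finrank_inf_iInf_ker_pullback_add L s
    (le_refl (homogeneousSubmodule (Fin m) k n))
  set A := homogeneousSubmodule (Fin m) k n ⊓ ⨅ i ∈ s, LinearMap.ker (pullback (L i)).toLinearMap
  have := Submodule.finiteDimensional_of_le (inf_le_left : A ≤ _)
  have hpoints := finrank_le_finrank_inf_ker_evalAt_add A p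
  rw [finrank_homogeneousSubmodule, Fintype.card_fin] at hlines
  omega

theorem finrank_add_card_le_of_vanishing_on_ker [Infinite k] {ι : Type*} [Fintype ι] {m n : ℕ}
    {ψ : Dual k (Fin m → k)} (hψ : ψ ≠ 0) {p : ι → Fin m → k} (hp : LinearIndependent k p)
    (hψp : ∀ i, ψ (p i) ≠ 0) (hn : n ≠ 0) {A : Submodule k (MvPolynomial (Fin m) k)}
    (hA : ∀ F ∈ A, F.IsHomogeneous (n + 1) ∧ (∀ x, ψ x = 0 → eval x F = 0) ∧
      ∀ i, eval (p i) F = 0) :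
    finrank k A + Fintype.card ι ≤ (m + n - 1).choose n := by
  set T := homogeneousSubmodule (Fin m) k n ⊓ LinearMap.ker (evalAt p)
  have hAT : A ≤ T.map (LinearMap.mulLeft k (linearForm ψ)) := by
    intro F hF
    obtain ⟨hF, hFψ, hFp⟩ := hA F hF
    obtain ⟨q, hq, rfl⟩ := exists_isHomogeneous_eq_linearForm_mul hψ hF hFψ
    refine ⟨q, ⟨hq, LinearMap.mem_ker.2 ?_⟩, rfl⟩
    ext i
    simpa [hψp i] using hFp i
  have hT : finrank k T + Fintype.card ι = (m + n - 1).choose n := by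
    have := (homogeneousSubmodule (Fin m) k n).finrank_map_add_finrank_inf_ker (evalAt p)
    rw [map_evalAt_homogeneousSubmodule hp hn, finrank_top, Module.finrank_pi,
      finrank_homogeneousSubmodule, Fintype.card_fin] at this
    exact (add_comm _ _).trans this
  have := Submodule.finiteDimensional_of_le (inf_le_left : T ≤ _)
  have := (Submodule.finrank_mono hAT).trans (Submodule.finrank_map_le _ T)
  omega

end MvPolynomial

section SkewLines

def NoQuadricThroughTwoLinesAndPoints (V : Fin 3 → Submodule k (Fin 4 → k))
    (w : Fin 4 → Fin 4 → k) : Prop :=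
  ∀ l : Fin 3, ∀ q : MvPolynomial (Fin 4) k, q.IsHomogeneous 2 →
    (∀ p : Fin 3, p ≠ l → ∀ v ∈ V p, eval v q = 0) → (∀ i, eval (w i) q = 0) → q = 0

variable {V : Fin 3 → Submodule k (Fin 4 → k)} {w : Fin 4 → Fin 4 → k}

theorem mem_vanishingSubmodule_iUnion_union_range {f : MvPolynomial (Fin 4) k} :
    f ∈ vanishingSubmodule ((⋃ p, (V p : Set (Fin 4 → k))) ∪ Set.range w) ↔
      (∀ p, ∀ x ∈ V p, eval x f = 0) ∧ ∀ i, eval (w i) f = 0 := by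
  simp only [vanishingSubmodule, Submodule.mem_mk, AddSubmonoid.mem_mk, AddSubsemigroup.mem_mk,
    Set.mem_ofPred_eq, Set.mem_union, Set.mem_iUnion, SetLike.mem_coe, Set.mem_range, or_imp,
    forall_and, forall_exists_index, forall_apply_eq_imp_iff]
  exact and_congr_left' forall_comm

theorem four_le_finrank_vanishingSubmodule (hVdim : ∀ p, finrank k (V p) = 2) :
    4 ≤ finrank k ↥(homogeneousSubmodule (Fin 4) k 3 ⊓
      vanishingSubmodule ((⋃ p, (V p : Set (Fin 4 → k))) ∪ Set.range w)) := by
  choose L _ hL using fun p => (V p).exists_injective_range_eq (hVdim p)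
  have hcount := choose_le_finrank_inf_ker_add 3 L Finset.univ w
  have hle : homogeneousSubmodule (Fin 4) k 3
      ⊓ (⨅ p ∈ Finset.univ, LinearMap.ker (pullback (L p)).toLinearMap) ⊓ LinearMap.ker (evalAt w)
      ≤ homogeneousSubmodule (Fin 4) k 3 ⊓
        vanishingSubmodule ((⋃ p, (V p : Set (Fin 4 → k))) ∪ Set.range w) := by
    intro f hf
    simp only [Submodule.mem_inf, Submodule.mem_iInf, LinearMap.mem_ker, Finset.mem_univ,
      forall_const] at hf
    obtain ⟨⟨hf, hfL⟩, hfw⟩ := hf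
    exact ⟨hf, mem_vanishingSubmodule_iUnion_union_range.2
      ⟨fun p x hx => eval_eq_zero_of_pullback_eq_zero (hfL p) (hL p ▸ hx), congrFun hfw⟩⟩
  have := Submodule.finrank_mono hle
  norm_num [Nat.choose] at hcount
  omega

theorem NoQuadricThroughTwoLinesAndPoints.notMem (hres : NoQuadricThroughTwoLinesAndPoints V w)
    (hVdim : ∀ p, finrank k (V p) = 2) (i : Fin 4) (p : Fin 3) : w i ∉ V p := by
  intro hwi
  obtain ⟨l, hl⟩ := exists_ne p
  choose L _ hL using fun p => (V p).exists_injective_range_eq (hVdim p)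
  have hS : 1 ≤ finrank k ↥(homogeneousSubmodule (Fin 4) k 2 ⊓ (⨅ p ∈ Finset.univ.erase l,
      LinearMap.ker (pullback (L p)).toLinearMap) ⊓ LinearMap.ker (evalAt (w ∘ i.succAbove))) := by
    have := choose_le_finrank_inf_ker_add 2 L (Finset.univ.erase l) (w ∘ i.succAbove)
    rw [Finset.card_erase_of_mem (Finset.mem_univ l)] at this
    norm_num [Nat.choose] at this
    omega
  obtain ⟨q, hq, hq0⟩ := Submodule.exists_mem_ne_zero_of_ne_bot (Submodule.one_le_finrank_iff.1 hS)
  simp only [Submodule.mem_inf, Submodule.mem_iInf, LinearMap.mem_ker, Finset.mem_erase,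
    Finset.mem_univ, and_true] at hq
  obtain ⟨⟨hq, hqL⟩, hqw⟩ := hq
  have hqV : ∀ p', p' ≠ l → ∀ x ∈ V p', eval x q = 0 := fun p' hp' x hx =>
    eval_eq_zero_of_pullback_eq_zero (hqL p' hp') (hL p' ▸ hx)
  refine hq0 (hres l q hq hqV fun j => ?_)
  rcases eq_or_ne j i with rfl | hj
  · exact hqV p hl.symm _ hwi
  · obtain ⟨j, rfl⟩ := Fin.exists_succAbove_eq hj
    exact congrFun hqw j

theorem NoQuadricThroughTwoLinesAndPoints.eq_zero_of_vanishing_on_ker [Infinite k]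
    (hres : NoQuadricThroughTwoLinesAndPoints V w) (hVdim : ∀ p, finrank k (V p) = 2)
    (hVdisj : ∀ p q : Fin 3, p ≠ q → V p ⊓ V q = ⊥)
    {h : Dual k (Fin 4 → k)} (hV0 : V 0 ≤ LinearMap.ker h) (hw : ∀ i, h (w i) ≠ 0)
    {f : MvPolynomial (Fin 4) k} (hf : f.IsHomogeneous 3) (hfV : ∀ p, ∀ x ∈ V p, eval x f = 0)
    (hfw : ∀ i, eval (w i) f = 0) (hfh : ∀ x, h x = 0 → eval x f = 0) : f = 0 := by
  have hh : h ≠ 0 := fun h0 => hw 0 (by simp [h0])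
  obtain ⟨g, hg, rfl⟩ := exists_isHomogeneous_eq_linearForm_mul hh hf hfh
  have hgV : ∀ p, p ≠ 0 → ∀ x ∈ V p, eval x g = 0 := fun p hp => by
    refine eval_eq_zero_of_eval_mul_eq_zero (f := linearForm h)
      (fun x hx => by simpa using hfV p x hx) ?_
    by_contra! hVh
    have htop : V 0 ⊔ V p = ⊤ :=
      Submodule.eq_top_of_disjoint _ _ (by simp [hVdim]) (disjoint_iff.2 (hVdisj 0 p hp.symm))
    refine hh (LinearMap.ker_eq_top.1 (top_le_iff.1 (htop ▸ sup_le hV0 fun x hx => ?_)))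
    simpa using hVh x hx
  have hgw : ∀ i, eval (w i) g = 0 := fun i => by simpa [hw i] using hfw i
  rw [hres 0 g hg hgV hgw, mul_zero]

theorem NoQuadricThroughTwoLinesAndPoints.finrank_vanishingSubmodule_le_four_of_plane
    [Infinite k] (hres : NoQuadricThroughTwoLinesAndPoints V w) (hVdim : ∀ p, finrank k (V p) = 2)
    (hVdisj : ∀ p q : Fin 3, p ≠ q → V p ⊓ V q = ⊥)
    {h : Dual k (Fin 4 → k)} (hV0 : V 0 ≤ LinearMap.ker h) (hw : ∀ i, h (w i) ≠ 0)
    {L : (Fin 3 → k) →ₗ[k] (Fin 4 → k)} (hLH : LinearMap.range L = LinearMap.ker h)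
    {ψ : Dual k (Fin 3 → k)} (hψ : ψ ≠ 0) (hψV : LinearMap.ker ψ = (V 0).comap L)
    {y : Fin 2 → Fin 3 → k} (hy : LinearIndependent k y) (hyV : ∀ j, L (y j) ∈ V j.succ)
    (hψy : ∀ j, ψ (y j) ≠ 0) :
    finrank k ↥(homogeneousSubmodule (Fin 4) k 3 ⊓
      vanishingSubmodule ((⋃ p, (V p : Set (Fin 4 → k))) ∪ Set.range w)) ≤ 4 := by
  set K := homogeneousSubmodule (Fin 4) k 3 ⊓
      vanishingSubmodule ((⋃ p, (V p : Set (Fin 4 → k))) ∪ Set.range w)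
  have hinj : K ⊓ LinearMap.ker (pullback L).toLinearMap = ⊥ := by
    refine eq_bot_iff.2 fun f ⟨⟨hf, hfv⟩, hfL⟩ => ?_
    rw [SetLike.mem_coe, mem_vanishingSubmodule_iUnion_union_range] at hfv
    exact hres.eq_zero_of_vanishing_on_ker hVdim hVdisj hV0 hw hf hfv.1 hfv.2
      fun x hx => eval_eq_zero_of_pullback_eq_zero hfL (hLH ▸ hx)
  have hbound := finrank_add_card_le_of_vanishing_on_ker hψ hy hψy two_ne_zero
    (A := K.map (pullback L).toLinearMap) (by
      rintro _ ⟨f, ⟨hf, hfv⟩, rfl⟩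
      rw [SetLike.mem_coe, mem_vanishingSubmodule_iUnion_union_range] at hfv
      refine ⟨hf.pullback L, fun x hx => ?_, fun j => by simpa using hfv.1 _ _ (hyV j)⟩
      exact (eval_pullback L f x).trans (hfv.1 0 _ (by rwa [← Submodule.mem_comap, ← hψV])))
  have := K.finrank_map_add_finrank_inf_ker (pullback L).toLinearMap
  rw [hinj, finrank_bot] at this
  norm_num [Nat.choose] at hbound
  omega

theorem NoQuadricThroughTwoLinesAndPoints.finrank_vanishingSubmodule_le_four [Infinite k]
    (hres : NoQuadricThroughTwoLinesAndPoints V w) (hVdim : ∀ p, finrank k (V p) = 2)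
    (hVdisj : ∀ p q : Fin 3, p ≠ q → V p ⊓ V q = ⊥) :
    finrank k ↥(homogeneousSubmodule (Fin 4) k 3 ⊓
      vanishingSubmodule ((⋃ p, (V p : Set (Fin 4 → k))) ∪ Set.range w)) ≤ 4 := by
  obtain ⟨h, hV0, hw⟩ :=
    (V 0).exists_dual_le_ker_forall_apply_ne_zero fun i => hres.notMem hVdim i 0
  have hH : finrank k (LinearMap.ker h) = 3 := by
    have := Module.Dual.finrank_ker_add_one_of_ne_zero (f := h) fun h0 => hw 0 (by simp [h0])
    rw [Module.finrank_fin_fun] at this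
    omega
  obtain ⟨L, hLinj, hLH⟩ := (LinearMap.ker h).exists_injective_range_eq hH
  have hW : finrank k ((V 0).comap L) + 1 = finrank k (Fin 3 → k) := by
    have := ((V 0).comap L).finrank_map_add_finrank_inf_ker L
    rw [Submodule.map_comap_eq, hLH, inf_eq_right.2 hV0, hVdim, LinearMap.ker_eq_bot.2 hLinj,
      inf_bot_eq, finrank_bot] at this
    rw [Module.finrank_fin_fun]
    omega
  obtain ⟨ψ, hψ, hψV⟩ := ((V 0).comap L).exists_dual_ker_eq hW
  choose y hyV hy0 using fun p => L.exists_apply_mem_ne_zero_of_finrank_lt_add (W := V p)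
    (by rw [hVdim, hLH, hH, Module.finrank_fin_fun]; norm_num)
  have hψy : ∀ p, p ≠ 0 → ψ (y p) ≠ 0 := fun p hp hψ0 => by
    have hyW : y p ∈ (V 0).comap L := hψV ▸ hψ0
    have hy0V : L (y p) ∈ V p ⊓ V 0 := ⟨hyV p, hyW⟩
    exact hy0 p (by rwa [hVdisj p 0 hp] at hy0V)
  refine hres.finrank_vanishingSubmodule_le_four_of_plane hVdim hVdisj hV0 hw hLH hψ hψV
    (y := fun j => y j.succ) ?_ (fun j => hyV _) fun j => hψy _ j.succ_ne_zero
  refine LinearIndependent.of_comp L ?_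
  convert LinearIndependent.pair_of_inf_eq_bot (hVdisj 1 2 (by decide)) (hyV 1) (hyV 2) (hy0 1)
    (hy0 2) using 1
  ext j : 1
  fin_cases j <;> rfl

end SkewLines

end

theorem stmt_5_general {k : Type*} [Field k] [IsAlgClosed k]
    (V : Fin 3 → Submodule k (Fin 4 → k))
    (hVdim : ∀ p, Module.finrank k (V p) = 2)
    (hVdisj : ∀ p q : Fin 3, p ≠ q → V p ⊓ V q = ⊥)
    (w : Fin 4 → (Fin 4 → k))
    (hres : ∀ l : Fin 3, ∀ q : MvPolynomial (Fin 4) k, q.IsHomogeneous 2 →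
      (∀ p : Fin 3, p ≠ l → ∀ v ∈ V p, eval v q = 0) →
      (∀ i, eval (w i) q = 0) → q = 0) :
    Module.finrank k
      ↥(homogeneousSubmodule (Fin 4) k 3 ⊓
        vanishingSubmodule ((⋃ p, (V p : Set (Fin 4 → k))) ∪ Set.range w)) = 4 := by
  have hres' : NoQuadricThroughTwoLinesAndPoints V w := hres
  exact le_antisymm (hres'.finrank_vanishingSubmodule_le_four hVdim hVdisj)
    (four_le_finrank_vanishingSubmodule hVdim)

/-- `h⁰(I_{Y∪W}(3)) = 4`, where `Y` is the union of three mutually disjoint lines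
and `W` consists of four points spanning `ℙ³` imposing independent conditions on
quadrics through two of the lines. -/
theorem stmt_5 {k : Type*} [Field k] [IsAlgClosed k] [CharZero k]
    (V : Fin 3 → Submodule k (Fin 4 → k))
    (hVdim : ∀ p, Module.finrank k (V p) = 2)
    (hVdisj : ∀ p q : Fin 3, p ≠ q → V p ⊓ V q = ⊥)
    (w : Fin 4 → (Fin 4 → k))
    (hw0 : ∀ i, w i ≠ 0)
    (hwspan : Submodule.span k (Set.range w) = ⊤)
    (hres : ∀ l : Fin 3, ∀ q : MvPolynomial (Fin 4) k, q.IsHomogeneous 2 →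
      (∀ p : Fin 3, p ≠ l → ∀ v ∈ V p, eval v q = 0) →
      (∀ i, eval (w i) q = 0) → q = 0) :
    Module.finrank k
      ↥(homogeneousSubmodule (Fin 4) k 3 ⊓
        vanishingSubmodule ((⋃ p, (V p : Set (Fin 4 → k))) ∪ Set.range w)) = 4 :=
  stmt_5_general V hVdim hVdisj w hres
end

section
/- Let V₁, V₂, V₃ ⊆ k⁴ be 2-dimensional linear subspaces with V_i ∩ V_j = {0} for i ≠ j, and let w ∈ k⁴ be a nonzero vector such that every nonzero homogeneous polynomial of degree 2 vanishing on V₁ ∪ V₂ ∪ V₃ is nonzero at w (the point P = [w] does not lie on the quadric surface containing the three lines). For l = 1, 2, 3 let h_l be a nonzero linear form (homogeneous polynomial of degree 1) vanishing on the subspace V_l and at w (the equation of the plane spanned by the line L_l and the point P). Then h₁, h₂, h₃ are linearly independent over k. -/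
/-!
Suppose `h₁, h₂, h₃` are dependent. Their linear parts `φ_l` then have a common kernel `W` of
dimension at least 2, and exactly 2 because two lines span `k⁴`. Inside the hyperplane
`ker φ_l` the plane `W` meets the plane `V_l`, so the line `ℙ(W)` through `P` meets all three
lines. A quadric through the three lines restricts to a binary quadratic form on `W` with three
pairwise independent zeros, hence vanishes on `W`, in particular at `P`.
-/

open MvPolynomial Module Submodule

namespace MvPolynomial

variable {σ k : Type*} [Fintype σ] [Field k]

noncomputable def linearPart : MvPolynomial σ k →ₗ[k] Dual k (σ → k) :=
  ∑ i, (lcoeff k (Finsupp.single i 1)).smulRight (LinearMap.proj i)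

theorem linearPart_apply (p : MvPolynomial σ k) (v : σ → k) :
    linearPart p v = ∑ i, coeff (Finsupp.single i 1) p * v i := by
  simp [linearPart]

theorem IsHomogeneous.sum_coeff_single_smul_X {p : MvPolynomial σ k} (hp : p.IsHomogeneous 1) :
    ∑ i, coeff (Finsupp.single i 1) p • X i = p := by
  classical
  obtain ⟨c, rfl⟩ := (mem_span_range_iff_exists_fun k).mp
    (homogeneousSubmodule_one_eq_span_X (σ := σ) (R := k) ▸ (mem_homogeneousSubmodule 1 p).mpr hp)
  refine Finset.sum_congr rfl fun i _ => ?_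
  simp [coeff_sum, coeff_X, Finsupp.single_left_inj one_ne_zero]

theorem IsHomogeneous.eval_eq_linearPart {p : MvPolynomial σ k} (hp : p.IsHomogeneous 1)
    (v : σ → k) : eval v p = linearPart p v := by
  conv_lhs => rw [← hp.sum_coeff_single_smul_X]
  simp [linearPart_apply]

theorem IsHomogeneous.linearPart_ne_zero {p : MvPolynomial σ k} (hp : p.IsHomogeneous 1)
    (hp0 : p ≠ 0) : linearPart p ≠ 0 := by
  classical
  intro h0
  apply hp0
  rw [← hp.sum_coeff_single_smul_X]
  refine Finset.sum_eq_zero fun i _ => ?_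
  have := LinearMap.congr_fun h0 (Pi.single i 1)
  simp only [linearPart_apply, Pi.single_apply, mul_ite, mul_one, mul_zero,
    Finset.sum_ite_eq', Finset.mem_univ, if_true, LinearMap.zero_apply] at this
  simp [this]

theorem exists_isHomogeneous_two_eval_eq (B : LinearMap.BilinForm k (σ → k)) :
    ∃ q : MvPolynomial σ k, q.IsHomogeneous 2 ∧ ∀ v, eval v q = B v v := by
  classical
  refine ⟨∑ i, ∑ j, C (LinearMap.BilinForm.toMatrix' B i j) * (X i * X j), ?_, fun v => ?_⟩
  · refine IsHomogeneous.sum _ _ _ fun i _ => IsHomogeneous.sum _ _ _ fun j _ => ?_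
    simpa using (isHomogeneous_C σ _).mul ((isHomogeneous_X k i).mul (isHomogeneous_X k j))
  · conv_rhs => rw [← Matrix.toBilin'_toMatrix' B, Matrix.toBilin'_apply]
    simp only [map_sum, map_mul, eval_C, eval_X]
    exact Finset.sum_congr rfl fun i _ => Finset.sum_congr rfl fun j _ => by ring

end MvPolynomial

section Subspaces

variable {k E : Type*} [Field k] [AddCommGroup E] [Module k E]

theorem Submodule.span_pair_eq_of_finrank_eq_two {W V₀ V₁ : Submodule k E}
    (hW : finrank k W = 2) (hV : V₀ ⊓ V₁ = ⊥) {u₀ u₁ : E} (h₀ : u₀ ∈ W ⊓ V₀)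
    (h₁ : u₁ ∈ W ⊓ V₁) (hu₀ : u₀ ≠ 0) (hu₁ : u₁ ≠ 0) : span k {u₀, u₁} = W := by
  have : FiniteDimensional k W := .of_finrank_pos (by omega)
  refine eq_of_le_of_finrank_le (span_le.mpr (Set.pair_subset h₀.1 h₁.1)) ?_
  have hinf : span k {u₀} ⊓ span k {u₁} = ⊥ :=
    eq_bot_iff.mpr (hV ▸ inf_le_inf ((span_singleton_le_iff_mem _ _).mpr h₀.2)
      ((span_singleton_le_iff_mem _ _).mpr h₁.2))
  have := finrank_sup_add_finrank_inf_eq (span k {u₀}) (span k {u₁})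
  rw [hinf, finrank_bot, finrank_span_singleton hu₀, finrank_span_singleton hu₁] at this
  rw [span_insert, hW]
  omega

theorem Submodule.inf_ne_bot_of_le_of_finrank_lt [FiniteDimensional k E] {W V K : Submodule k E}
    (hW : W ≤ K) (hV : V ≤ K) (h : finrank k K < finrank k W + finrank k V) : W ⊓ V ≠ ⊥ := by
  intro hbot
  have hsup := finrank_sup_add_finrank_inf_eq W V
  have hle := finrank_mono (sup_le hW hV)
  rw [hbot, finrank_bot] at hsup
  omega

theorem Module.Dual.exists_finrank_eq_two_of_not_linearIndependent [FiniteDimensional k E]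
    (hE : finrank k E = 4) {V : Fin 3 → Submodule k E} (hVdim : ∀ p, finrank k (V p) = 2)
    (hVdisj : ∀ p q, p ≠ q → V p ⊓ V q = ⊥) {φ : Fin 3 → Dual k E} (hφ : ∀ p, φ p ≠ 0)
    (hφV : ∀ p, V p ≤ LinearMap.ker (φ p)) (hdep : ¬ LinearIndependent k φ) :
    ∃ W : Submodule k E, finrank k W = 2 ∧ (∀ p, W ⊓ V p ≠ ⊥) ∧
      ∀ v, (∀ p, φ p v = 0) → v ∈ W := by
  set W := (span k (Set.range φ)).dualCoannihilator
  have hWφ : ∀ p, W ≤ LinearMap.ker (φ p) := fun p v hv =>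
    (mem_dualCoannihilator _).mp hv _ (subset_span ⟨p, rfl⟩)
  have hker : ∀ p, finrank k (LinearMap.ker (φ p)) = 3 := fun p => by
    have := Module.Dual.finrank_ker_add_one_of_ne_zero (hφ p)
    omega
  have hW : finrank k W = 2 := by
    refine le_antisymm ?_ ?_
    · by_contra! hW
      have hWeq : ∀ p, W = LinearMap.ker (φ p) := fun p =>
        eq_of_le_of_finrank_le (hWφ p) (by rw [hker p]; omega)
      have htop : V 0 ⊔ V 1 = ⊤ := eq_top_of_disjoint _ _ (by rw [hE, hVdim, hVdim])
        (disjoint_iff.mpr (hVdisj 0 1 (by decide)))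
      have hker0 : LinearMap.ker (φ 0) = ⊤ :=
        top_le_iff.mp (htop ▸ sup_le (hφV 0) (hWeq 0 ▸ hWeq 1 ▸ hφV 1))
      have := hker 0
      rw [hker0, finrank_top] at this
      omega
    · have hspan : finrank k (span k (Set.range φ)) ≤ 2 := by
        have := mt linearIndependent_iff_card_le_finrank_span.mpr hdep
        simp only [Fintype.card_fin, Set.finrank, not_le] at this
        omega
      have : finrank k _ + finrank k W = _ :=
        Subspace.finrank_add_finrank_dualCoannihilator_eq (span k (Set.range φ))
      omega
  refine ⟨W, hW, fun p => inf_ne_bot_of_le_of_finrank_lt (hWφ p) (hφV p) ?_, fun v hv => ?_⟩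
  · rw [hker p, hW, hVdim p]
    norm_num
  · rw [← SetLike.mem_coe, coe_dualCoannihilator_span]
    rintro _ ⟨p, rfl⟩
    exact hv p

end Subspaces

namespace LinearMap.BilinForm

variable {k E : Type*} [Field k] [AddCommGroup E] [Module k E]

theorem apply_self_eq_zero_of_mem_span_pair (B : LinearMap.BilinForm k E) {a b : E} {α β : k}
    (hα : α ≠ 0) (hβ : β ≠ 0) (ha : B a a = 0) (hb : B b b = 0)
    (hab : B (α • a + β • b) (α • a + β • b) = 0) {v : E} (hv : v ∈ span k {a, b}) :
    B v v = 0 := by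
  obtain ⟨s, t, rfl⟩ := mem_span_pair.mp hv
  simp only [map_add, map_smul, LinearMap.add_apply, LinearMap.smul_apply, smul_eq_mul, ha, hb]
    at hab ⊢
  have hpolar : B a b + B b a = 0 := by
    have : α * β * (B a b + B b a) = 0 := by linear_combination hab
    simpa [hα, hβ] using this
  linear_combination (s * t) * hpolar

theorem apply_self_eq_zero_of_inf_ne_bot (B : LinearMap.BilinForm k E)
    {V : Fin 3 → Submodule k E} (hV : ∀ p q, p ≠ q → V p ⊓ V q = ⊥)
    (hB : ∀ p, ∀ v ∈ V p, B v v = 0) {W : Submodule k E} (hW : finrank k W = 2)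
    (hWV : ∀ p, W ⊓ V p ≠ ⊥) {v : E} (hv : v ∈ W) : B v v = 0 := by
  choose u hu hu0 using fun p => (Submodule.ne_bot_iff _).mp (hWV p)
  have hspan : span k {u 0, u 1} = W :=
    span_pair_eq_of_finrank_eq_two hW (hV 0 1 (by decide)) (hu 0) (hu 1) (hu0 0) (hu0 1)
  obtain ⟨α, β, hαβ⟩ := mem_span_pair.mp (hspan ▸ (hu 2).1)
  have hα : α ≠ 0 := by
    rintro rfl
    refine hu0 2 ((Submodule.mem_bot k).mp ?_)
    rw [← hV 1 2 (by decide)]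
    exact ⟨by simpa [← hαβ] using (V 1).smul_mem β (hu 1).2, (hu 2).2⟩
  have hβ : β ≠ 0 := by
    rintro rfl
    refine hu0 2 ((Submodule.mem_bot k).mp ?_)
    rw [← hV 0 2 (by decide)]
    exact ⟨by simpa [← hαβ] using (V 0).smul_mem α (hu 0).2, (hu 2).2⟩
  exact B.apply_self_eq_zero_of_mem_span_pair hα hβ (hB 0 _ (hu 0).2) (hB 1 _ (hu 1).2)
    (hαβ ▸ hB 2 _ (hu 2).2) (hspan ▸ hv)

theorem exists_apply_self_eq_zero_of_isCompl {V₀ V₁ V₂ : Submodule k E} (hV : IsCompl V₀ V₁)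
    (h₀ : finrank k V₀ = 2) (h₁ : finrank k V₁ = 2) (h₂ : finrank k V₂ = 2) :
    ∃ B : LinearMap.BilinForm k E, (∀ v ∈ V₀, B v v = 0) ∧ (∀ v ∈ V₁, B v v = 0) ∧
      (∀ v ∈ V₂, B v v = 0) ∧ ∃ v, B v v ≠ 0 := by
  have : FiniteDimensional k V₀ := .of_finrank_pos (by omega)
  have : FiniteDimensional k V₁ := .of_finrank_pos (by omega)
  have : FiniteDimensional k V₂ := .of_finrank_pos (by omega)
  let π₀ := V₀.projectionOnto V₁ hV
  let π₁ := V₁.projectionOnto V₀ hV.symm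
  let e := finBasisOfFinrankEq k V₂ h₂
  let d : Fin 3 → E := ![e 0, e 1, e 0 + e 1]
  -- The forms `b.compl₁₂ π₀ π₁` vanish on `V₀ ∪ V₁` and form a 4-dimensional space, while
  -- vanishing at the three points `d` of `V₂` imposes only 3 linear conditions.
  let T : (V₀ →ₗ[k] V₁ →ₗ[k] k) →ₗ[k] (Fin 3 → k) :=
    { toFun := fun b r => b (π₀ (d r)) (π₁ (d r))
      map_add' := fun _ _ => rfl
      map_smul' := fun _ _ => rfl }
  obtain ⟨b, hbT, hb0⟩ := (Submodule.ne_bot_iff _).mp <| LinearMap.ker_ne_bot_of_finrank_lt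
    (V := V₀ →ₗ[k] V₁ →ₗ[k] k) (V₂ := Fin 3 → k) (f := T) (by simp [finrank_linearMap, h₀, h₁])
  have hTb : T b = 0 := hbT
  have hd : ∀ r, b (π₀ (d r)) (π₁ (d r)) = 0 := fun r => congrFun hTb r
  refine ⟨b.compl₁₂ π₀ π₁, fun v hv => ?_, fun v hv => ?_, fun v hv => ?_, ?_⟩
  · simp [π₁, projectionOnto_apply_of_mem_right hV.symm hv]
  · simp [π₀, projectionOnto_apply_of_mem_right hV hv]
  · refine apply_self_eq_zero_of_mem_span_pair _ one_ne_zero one_ne_zero (hd 0) (hd 1)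
      (by simpa [d] using hd 2) (mem_span_pair.mpr ⟨e.repr ⟨v, hv⟩ 0, e.repr ⟨v, hv⟩ 1, ?_⟩)
    have := congr_arg Subtype.val (e.sum_repr ⟨v, hv⟩)
    rw [Fin.sum_univ_two] at this
    simpa [d] using this
  · obtain ⟨x, y, hxy⟩ : ∃ x y, b x y ≠ 0 := by
      by_contra! h
      exact hb0 (LinearMap.ext₂ h)
    refine ⟨x + y, ?_⟩
    simpa [π₀, π₁, projectionOnto_apply_of_mem_right hV y.2,
      projectionOnto_apply_of_mem_right hV.symm x.2] using hxy

end LinearMap.BilinForm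

theorem stmt_7_general {k : Type*} [Field k]
    (V : Fin 3 → Submodule k (Fin 4 → k))
    (hVdim : ∀ p, Module.finrank k (V p) = 2)
    (hVdisj : ∀ p q : Fin 3, p ≠ q → V p ⊓ V q = ⊥)
    (w : Fin 4 → k)
    (hquad : ∀ q : MvPolynomial (Fin 4) k, q.IsHomogeneous 2 → q ≠ 0 →
      (∀ p : Fin 3, ∀ v ∈ V p, eval v q = 0) → eval w q ≠ 0)
    (h : Fin 3 → MvPolynomial (Fin 4) k)
    (hh1 : ∀ l, (h l).IsHomogeneous 1)
    (hhne : ∀ l, h l ≠ 0)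
    (hhvan : ∀ l, ∀ v ∈ V l, eval v (h l) = 0)
    (hhw : ∀ l, eval w (h l) = 0) :
    LinearIndependent k h := by
  by_contra hdep
  obtain ⟨W, hW, hWV, hwW⟩ := Module.Dual.exists_finrank_eq_two_of_not_linearIndependent
    (by simp) hVdim hVdisj (fun l => (hh1 l).linearPart_ne_zero (hhne l))
    (fun l v hv => by simpa [← (hh1 l).eval_eq_linearPart] using hhvan l v hv)
    (fun hφ => hdep (LinearIndependent.of_comp linearPart hφ))
  obtain ⟨B, hB₀, hB₁, hB₂, v, hv⟩ := LinearMap.BilinForm.exists_apply_self_eq_zero_of_isCompl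
    ((isCompl_iff_disjoint _ _ (by simp [hVdim])).mpr (disjoint_iff.mpr (hVdisj 0 1 (by decide))))
    (hVdim 0) (hVdim 1) (hVdim 2)
  have hBV : ∀ p, ∀ v ∈ V p, B v v = 0 := by
    simpa [Fin.forall_fin_succ] using ⟨hB₀, hB₁, hB₂⟩
  obtain ⟨q, hq, hqB⟩ := exists_isHomogeneous_two_eval_eq B
  refine hquad q hq ?_ (fun p v hv => hqB v ▸ hBV p v hv) ?_
  · rintro rfl
    exact hv (by simpa using (hqB v).symm)
  · rw [hqB]
    exact B.apply_self_eq_zero_of_inf_ne_bot hVdisj hBV hW hWV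
      (hwW w fun l => (hh1 l).eval_eq_linearPart w ▸ hhw l)

/-- If a point `P` lies off the quadric through three pairwise disjoint lines in
`ℙ³`, the equations of the three planes spanned by `P` and each line are linearly
independent. -/
theorem stmt_7 {k : Type*} [Field k] [IsAlgClosed k] [CharZero k]
    (V : Fin 3 → Submodule k (Fin 4 → k))
    (hVdim : ∀ p, Module.finrank k (V p) = 2)
    (hVdisj : ∀ p q : Fin 3, p ≠ q → V p ⊓ V q = ⊥)
    (w : Fin 4 → k) (hw : w ≠ 0)
    (hquad : ∀ q : MvPolynomial (Fin 4) k, q.IsHomogeneous 2 → q ≠ 0 →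
      (∀ p : Fin 3, ∀ v ∈ V p, eval v q = 0) → eval w q ≠ 0)
    (h : Fin 3 → MvPolynomial (Fin 4) k)
    (hh1 : ∀ l, (h l).IsHomogeneous 1)
    (hhne : ∀ l, h l ≠ 0)
    (hhvan : ∀ l, ∀ v ∈ V l, eval v (h l) = 0)
    (hhw : ∀ l, eval w (h l) = 0) :
    LinearIndependent k h :=
  stmt_7_general V hVdim hVdisj w hquad h hh1 hhne hhvan hhw
end

section
/- Let V₁, V₂ ⊆ k⁴ be 2-dimensional linear subspaces with V₁ ∩ V₂ = {0} (two disjoint lines in ℙ³). Then the k-vector space of homogeneous polynomials of degree 2 in k[x₀, x₁, x₂, x₃] vanishing on V₁ ∪ V₂ has dimension exactly 4 (i.e., h⁰(I_{L₁∪L₂}(2)) = 4). -/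
/-!
Since `V₁ ∩ V₂ = 0`, the two planes are complementary, and a basis of `k⁴` adapted to
`k⁴ = V₁ ⊕ V₂` is a linear change of variables: it preserves homogeneity and transports vanishing
sets, so we may assume `V₁ = {x₂ = x₃ = 0}` and `V₂ = {x₀ = x₁ = 0}`. Evaluating a quadric at
`0/1`-vectors of a coordinate plane recovers its coefficients on the monomials in that plane's
coordinates, so a quadric vanishing on both planes is a combination of the four mixed monomials
`xᵢxⱼ` (`i ∈ {0, 1}`, `j ∈ {2, 3}`).
-/

open MvPolynomial

open Finsupp
open scoped Matrix

theorem Finsupp.exists_eq_single_add_single_of_degree_eq_two {σ : Type*} {m : σ →₀ ℕ}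
    (hm : m.degree = 2) : ∃ a b, m = single a 1 + single b 1 := by
  classical
  obtain ⟨a, b, hab⟩ := Multiset.card_eq_two.mp ((card_toMultiset m).trans hm)
  refine ⟨a, b, ?_⟩
  rw [← m.toMultiset_toFinsupp, hab, Multiset.insert_eq_cons, ← Multiset.singleton_add, map_add,
    Multiset.toFinsupp_singleton, Multiset.toFinsupp_singleton]

theorem Finsupp.support_single_add_single_one_subset {σ : Type*} [DecidableEq σ] (a b : σ) :
    (single a 1 + single b 1).support ⊆ {a, b} :=
  support_add.trans (Finset.union_subset (by simp) (by simp))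

theorem Finsupp.mem_support_single_add_single_one {σ : Type*} (a b : σ) :
    a ∈ (single a 1 + single b 1).support ∧ b ∈ (single a 1 + single b 1).support := by
  simp

namespace MvPolynomial

variable {R σ : Type*} [CommSemiring R]

theorem eval_indicator_one [DecidableEq σ] (t : Finset σ) (f : MvPolynomial σ R) :
    eval ((t : Set σ).indicator 1) f = ∑ m ∈ f.support with m.support ⊆ t, coeff m f := by
  rw [eval_eq, Finset.sum_filter]
  refine Finset.sum_congr rfl fun m _ => ?_
  split_ifs with hm
  · rw [Finset.prod_eq_one fun i hi => by simp [hm hi], mul_one]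
  · obtain ⟨i, hi, hit⟩ := Finset.not_subset.mp hm
    rw [Finset.prod_eq_zero hi (by simp [hit, Finsupp.mem_support_iff.mp hi]), mul_zero]

variable {f : MvPolynomial σ R}

theorem IsHomogeneous.exists_eq_single_add_single (hf : f.IsHomogeneous 2) {m : σ →₀ ℕ}
    (hm : m ∈ f.support) : ∃ a b, m = single a 1 + single b 1 :=
  exists_eq_single_add_single_of_degree_eq_two <| by
    rw [degree_eq_weight_one]; exact hf (mem_support_iff.mp hm)

theorem IsHomogeneous.sum_coeff_support_subset_eq_coeff [DecidableEq σ] (hf : f.IsHomogeneous 2)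
    {t : Finset σ} {m₀ : σ →₀ ℕ} (hm₀ : m₀.support ⊆ t)
    (h : ∀ a ∈ t, ∀ b ∈ t, single a 1 + single b 1 ≠ m₀ → coeff (single a 1 + single b 1) f = 0) :
    ∑ m ∈ f.support with m.support ⊆ t, coeff m f = coeff m₀ f := by
  refine Finset.sum_eq_single m₀ (fun m hm hne => ?_) fun hm₀' => ?_
  · obtain ⟨hm, hmt⟩ := Finset.mem_filter.mp hm
    obtain ⟨a, b, rfl⟩ := hf.exists_eq_single_add_single hm
    exact h a (hmt (mem_support_single_add_single_one a b).1) b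
      (hmt (mem_support_single_add_single_one a b).2) hne
  · by_contra hc
    exact hm₀' (Finset.mem_filter.mpr ⟨mem_support_iff.mpr hc, hm₀⟩)

theorem IsHomogeneous.coeff_single_add_single_eq_zero (hf : f.IsHomogeneous 2) {s : Set σ}
    (hvan : ∀ v : σ → R, (∀ l ∉ s, v l = 0) → eval v f = 0) {i j : σ} (hi : i ∈ s)
    (hj : j ∈ s) : coeff (single i 1 + single j 1) f = 0 := by
  classical
  have hsum (t : Finset σ) (ht : ↑t ⊆ s) : ∑ m ∈ f.support with m.support ⊆ t, coeff m f = 0 := by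
    rw [← eval_indicator_one]
    exact hvan _ fun l hl => Set.indicator_of_notMem (fun h => hl (ht h)) _
  have hdiag (a : σ) (ha : a ∈ s) : coeff (single a 1 + single a 1) f = 0 := by
    rw [← hsum {a} (by simpa using ha), hf.sum_coeff_support_subset_eq_coeff
      ((support_single_add_single_one_subset a a).trans (by simp))]
    simp
  rcases eq_or_ne i j with rfl | hij
  · exact hdiag i hi
  rw [← hsum {i, j} (by simp [Set.insert_subset_iff, hi, hj]),
    hf.sum_coeff_support_subset_eq_coeff (support_single_add_single_one_subset i j)]
  simp only [Finset.mem_insert, Finset.mem_singleton]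
  rintro a (rfl | rfl) b (rfl | rfl) hne
  · exact hdiag _ hi
  · exact absurd rfl hne
  · exact absurd (add_comm _ _) hne
  · exact hdiag _ hj

section LinearChangeOfVariables

variable {R m n o : Type*} [CommSemiring R] [Fintype n] [Fintype o]

theorem bind₁_toMvPolynomial_comp (A : Matrix m n R) (B : Matrix n o R) :
    (bind₁ B.toMvPolynomial).comp (bind₁ A.toMvPolynomial) = bind₁ (A * B).toMvPolynomial :=
  algHom_ext fun i => by simp [Matrix.toMvPolynomial_mul]

theorem eval_bind₁_toMvPolynomial (A : Matrix m n R) (v : n → R) (p : MvPolynomial m R) :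
    eval v (bind₁ A.toMvPolynomial p) = eval (A *ᵥ v) p := by
  simp only [eval, eval₂Hom_bind₁]
  simp [Matrix.toMvPolynomial_eval_eq_apply]

theorem IsHomogeneous.bind₁_toMvPolynomial {p : MvPolynomial m R} {d : ℕ}
    (hp : p.IsHomogeneous d) (A : Matrix m n R) : (bind₁ A.toMvPolynomial p).IsHomogeneous d := by
  simpa using hp.aeval _ (A.toMvPolynomial_isHomogeneous)

variable [Fintype m] [DecidableEq m] [DecidableEq n]

noncomputable def compLinearEquiv (e : (n → R) ≃ₗ[R] (m → R)) :
    MvPolynomial m R ≃ₐ[R] MvPolynomial n R :=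
  AlgEquiv.ofAlgHom (bind₁ (LinearMap.toMatrix' e.toLinearMap).toMvPolynomial)
    (bind₁ (LinearMap.toMatrix' e.symm.toLinearMap).toMvPolynomial)
    (by rw [bind₁_toMvPolynomial_comp, ← LinearMap.toMatrix'_comp]; simp)
    (by rw [bind₁_toMvPolynomial_comp, ← LinearMap.toMatrix'_comp]; simp)

theorem eval_compLinearEquiv (e : (n → R) ≃ₗ[R] (m → R)) (v : n → R) (p : MvPolynomial m R) :
    eval v (compLinearEquiv e p) = eval (e v) p := by
  rw [compLinearEquiv, AlgEquiv.ofAlgHom_apply, eval_bind₁_toMvPolynomial,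
    LinearMap.toMatrix'_mulVec, LinearEquiv.coe_coe]

theorem isHomogeneous_compLinearEquiv_iff (e : (n → R) ≃ₗ[R] (m → R)) {p : MvPolynomial m R}
    {d : ℕ} : (compLinearEquiv e p).IsHomogeneous d ↔ p.IsHomogeneous d := by
  refine ⟨fun h => ?_, fun h => h.bind₁_toMvPolynomial _⟩
  have h' := h.bind₁_toMvPolynomial (LinearMap.toMatrix' e.symm.toLinearMap)
  change ((compLinearEquiv e).symm (compLinearEquiv e p)).IsHomogeneous d at h'
  rwa [AlgEquiv.symm_apply_apply] at h'

end LinearChangeOfVariables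

section VanishingForms

variable {k σ τ : Type*} [Field k]

variable (k σ) in
/-- `H⁰(I_T(d))` in sheaf notation, when `T` is a cone. -/
noncomputable def homogeneousVanishingSubmodule (d : ℕ) (T : Set (σ → k)) :
    Submodule k (MvPolynomial σ k) :=
  homogeneousSubmodule σ k d ⊓ (vanishingIdeal k T).restrictScalars k

theorem mem_homogeneousVanishingSubmodule {d : ℕ} {T : Set (σ → k)} {p : MvPolynomial σ k} :
    p ∈ homogeneousVanishingSubmodule k σ d T ↔ p.IsHomogeneous d ∧ ∀ v ∈ T, eval v p = 0 :=
  Iff.rfl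

variable [Fintype σ] [Fintype τ] [DecidableEq σ] [DecidableEq τ]

theorem comap_compLinearEquiv_homogeneousVanishingSubmodule (e : (τ → k) ≃ₗ[k] (σ → k)) (d : ℕ)
    (T : Set (τ → k)) :
    (homogeneousVanishingSubmodule k τ d T).comap (compLinearEquiv e).toLinearMap =
      homogeneousVanishingSubmodule k σ d (e '' T) := by
  ext p
  simp [mem_homogeneousVanishingSubmodule, isHomogeneous_compLinearEquiv_iff,
    eval_compLinearEquiv]

theorem finrank_homogeneousVanishingSubmodule_image (e : (τ → k) ≃ₗ[k] (σ → k)) (d : ℕ)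
    (T : Set (τ → k)) :
    Module.finrank k (homogeneousVanishingSubmodule k σ d (e '' T)) =
      Module.finrank k (homogeneousVanishingSubmodule k τ d T) := by
  rw [← comap_compLinearEquiv_homogeneousVanishingSubmodule, ← AlgEquiv.toLinearEquiv_toLinearMap,
    Submodule.comap_equiv_eq_map_symm, LinearEquiv.finrank_map_eq]

end VanishingForms

section CoordinatePlanes

variable {k ι₁ ι₂ : Type*} [Field k]

theorem X_mul_X_eq_monomial {σ : Type*} (a b : σ) :
    (X a * X b : MvPolynomial σ k) = monomial (single a 1 + single b 1) 1 := by
  rw [X, X, monomial_mul, one_mul]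

theorem homogeneousVanishingSubmodule_two_coordinate_eq_span :
    homogeneousVanishingSubmodule k (ι₁ ⊕ ι₂) 2
        ({v | ∀ j, v (Sum.inr j) = 0} ∪ {v | ∀ i, v (Sum.inl i) = 0}) =
      Submodule.span k (Set.range fun p : ι₁ × ι₂ => X (Sum.inl p.1) * X (Sum.inr p.2)) := by
  refine le_antisymm (fun f hf => ?_) (Submodule.span_le.mpr ?_)
  · obtain ⟨hf, hvan⟩ := mem_homogeneousVanishingSubmodule.mp hf
    have h₁ (i i' : ι₁) : coeff (single (Sum.inl i) 1 + single (Sum.inl i') 1) f = 0 :=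
      hf.coeff_single_add_single_eq_zero (s := Set.range Sum.inl)
        (fun v hv => hvan v (Or.inl fun j => hv _ (by simp))) ⟨i, rfl⟩ ⟨i', rfl⟩
    have h₂ (j j' : ι₂) : coeff (single (Sum.inr j) 1 + single (Sum.inr j') 1) f = 0 :=
      hf.coeff_single_add_single_eq_zero (s := Set.range Sum.inr)
        (fun v hv => hvan v (Or.inr fun i => hv _ (by simp))) ⟨j, rfl⟩ ⟨j', rfl⟩
    have hmixed (i : ι₁) (j : ι₂) (c : k) :
        monomial (single (Sum.inl i) 1 + single (Sum.inr j) 1) c ∈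
          Submodule.span k (Set.range fun p : ι₁ × ι₂ => X (Sum.inl p.1) * X (Sum.inr p.2)) := by
      rw [← mul_one c, ← smul_eq_mul, ← smul_monomial, ← X_mul_X_eq_monomial]
      exact Submodule.smul_mem _ _ (Submodule.subset_span ⟨(i, j), rfl⟩)
    rw [f.as_sum]
    refine Submodule.sum_mem _ fun m hm => ?_
    obtain ⟨a | j, b | j', rfl⟩ := hf.exists_eq_single_add_single hm
    · simp [h₁]
    · exact hmixed _ _ _
    · rw [add_comm]; exact hmixed _ _ _
    · simp [h₂]
  · rintro _ ⟨⟨i, j⟩, rfl⟩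
    refine ⟨(isHomogeneous_X k _).mul (isHomogeneous_X k _), ?_⟩
    rintro v (hv | hv)
    · simp [hv j]
    · simp [hv i]

theorem linearIndependent_X_inl_mul_X_inr :
    LinearIndependent k fun p : ι₁ × ι₂ => (X (Sum.inl p.1) * X (Sum.inr p.2) :
      MvPolynomial (ι₁ ⊕ ι₂) k) := by
  have hinj : Function.Injective fun p : ι₁ × ι₂ =>
      single (Sum.inl p.1) 1 + single (Sum.inr p.2) (1 : ℕ) := by
    rintro ⟨i, j⟩ ⟨i', j'⟩ h
    have hi := DFunLike.congr_fun h (Sum.inl i)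
    have hj := DFunLike.congr_fun h (Sum.inr j)
    simp only [Finsupp.add_apply, single_eq_same, ne_eq, reduceCtorEq, not_false_eq_true,
      single_eq_of_ne, add_zero, zero_add] at hi hj
    simp only [Prod.mk.injEq]
    exact ⟨Sum.inl_injective (single_apply_ne_zero.mp (hi ▸ one_ne_zero)).1,
      Sum.inr_injective (single_apply_ne_zero.mp (hj ▸ one_ne_zero)).1⟩
  simp only [X_mul_X_eq_monomial]
  exact (basisMonomials (ι₁ ⊕ ι₂) k).linearIndependent.comp _ hinj

theorem finrank_homogeneousVanishingSubmodule_two_coordinate [Fintype ι₁] [Fintype ι₂] :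
    Module.finrank k (homogeneousVanishingSubmodule k (ι₁ ⊕ ι₂) 2
        ({v | ∀ j, v (Sum.inr j) = 0} ∪ {v | ∀ i, v (Sum.inl i) = 0})) =
      Fintype.card ι₁ * Fintype.card ι₂ := by
  rw [homogeneousVanishingSubmodule_two_coordinate_eq_span,
    finrank_span_eq_card linearIndependent_X_inl_mul_X_inr, Fintype.card_prod]

end CoordinatePlanes

end MvPolynomial

theorem Submodule.exists_linearEquiv_sum_image_eq_of_isCompl {R E ι₁ ι₂ : Type*} [Ring R]
    [AddCommGroup E] [Module R E] {V₁ V₂ : Submodule R E} (h : IsCompl V₁ V₂)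
    (e₁ : (ι₁ → R) ≃ₗ[R] V₁) (e₂ : (ι₂ → R) ≃ₗ[R] V₂) :
    ∃ e : (ι₁ ⊕ ι₂ → R) ≃ₗ[R] E,
      e '' {v | ∀ j, v (Sum.inr j) = 0} = V₁ ∧ e '' {v | ∀ i, v (Sum.inl i) = 0} = V₂ := by
  set e := (LinearEquiv.sumArrowLequivProdArrow ι₁ ι₂ R R).trans
    ((e₁.prodCongr e₂).trans (prodEquivOfIsCompl V₁ V₂ h))
  have he (v : ι₁ ⊕ ι₂ → R) : e v = (e₁ (v ∘ Sum.inl) : E) + e₂ (v ∘ Sum.inr) := rfl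
  refine ⟨e, Set.ext fun x => ⟨?_, fun hx => ?_⟩, Set.ext fun x => ⟨?_, fun hx => ?_⟩⟩
  · rintro ⟨v, hv, rfl⟩
    rw [he, show v ∘ Sum.inr = 0 from funext hv, map_zero, ZeroMemClass.coe_zero, add_zero]
    exact (e₁ _).2
  · exact ⟨Sum.elim (e₁.symm ⟨x, hx⟩) 0, fun j => rfl, by simp [he]⟩
  · rintro ⟨v, hv, rfl⟩
    rw [he, show v ∘ Sum.inl = 0 from funext hv, map_zero, ZeroMemClass.coe_zero, zero_add]
    exact (e₂ _).2
  · exact ⟨Sum.elim 0 (e₂.symm ⟨x, hx⟩), fun i => rfl, by simp [he]⟩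

theorem homogeneousSubmodule_inf_vanishingSubmodule {k : Type*} [Field k] (d : ℕ)
    (T : Set (Fin 4 → k)) :
    homogeneousSubmodule (Fin 4) k d ⊓ vanishingSubmodule T =
      homogeneousVanishingSubmodule k (Fin 4) d T :=
  rfl

theorem stmt_9_general {k : Type*} [Field k]
    (V₁ V₂ : Submodule k (Fin 4 → k))
    (h1 : Module.finrank k V₁ = 2)
    (h2 : Module.finrank k V₂ = 2)
    (hdisj : V₁ ⊓ V₂ = ⊥) :
    Module.finrank k
      ↥(homogeneousSubmodule (Fin 4) k 2 ⊓
        vanishingSubmodule ((V₁ : Set (Fin 4 → k)) ∪ (V₂ : Set (Fin 4 → k)))) = 4 := by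
  have hcompl : IsCompl V₁ V₂ :=
    (Submodule.isCompl_iff_disjoint V₁ V₂ (by simp [h1, h2])).mpr (disjoint_iff.mpr hdisj)
  obtain ⟨e, he₁, he₂⟩ := Submodule.exists_linearEquiv_sum_image_eq_of_isCompl hcompl
    (Module.finBasisOfFinrankEq k V₁ h1).equivFun.symm
    (Module.finBasisOfFinrankEq k V₂ h2).equivFun.symm
  rw [homogeneousSubmodule_inf_vanishingSubmodule, ← he₁, ← he₂, ← Set.image_union,
    finrank_homogeneousVanishingSubmodule_image,
    finrank_homogeneousVanishingSubmodule_two_coordinate, Fintype.card_fin]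

/-- For two disjoint lines `L₁, L₂` in `ℙ³`, `h⁰(I_{L₁∪L₂}(2)) = 4`. -/
theorem stmt_9 {k : Type*} [Field k] [IsAlgClosed k] [CharZero k]
    (V₁ V₂ : Submodule k (Fin 4 → k))
    (h1 : Module.finrank k V₁ = 2)
    (h2 : Module.finrank k V₂ = 2)
    (hdisj : V₁ ⊓ V₂ = ⊥) :
    Module.finrank k
      ↥(homogeneousSubmodule (Fin 4) k 2 ⊓
        vanishingSubmodule ((V₁ : Set (Fin 4 → k)) ∪ (V₂ : Set (Fin 4 → k)))) = 4 :=
  stmt_9_general V₁ V₂ h1 h2 hdisj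
end
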